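/- Let α > −1, α + β > −1/2, δ ∈ ℝ and 1 < p < ∞, and let S be any of the maximal operators U_{*,1}^{α,β}, U_{*,2}^{α,β}, Ũ_{*,2}^{α,β}. If S is well defined and bounded on L^p(x^δ dx), i.e. S f(x) < ∞ for almost every x > 0 for every nonnegative f ∈ L^p(x^δ dx) and there is a constant C with ‖Sf‖_{L^p(x^δ dx)} ≤ C‖f‖_{L^p(x^δ dx)} for all nonnegative f ∈ L^p(x^δ dx), then necessarily δ < (2α+β+1)p − 1, 1/p < α + β + 1/2, and −βp ≤ δ. -/
import Mathlib

set_option maxHeartbeats 1600000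

open MeasureTheory Set Filter
open scoped ENNReal NNReal

lemma aux_rpow_min_le {m M u κ : ℝ} (hm : 0 < m) (h1 : m ≤ u) (h2 : u ≤ M) :
    min (m ^ κ) (M ^ κ) ≤ u ^ κ := by
  rcases le_or_gt 0 κ with hκ | hκ
  · exact le_trans (min_le_left _ _) (Real.rpow_le_rpow hm.le h1 hκ)
  · have hu : 0 < u := lt_of_lt_of_le hm h1
    have h3 : u ^ (-κ) ≤ M ^ (-κ) :=
      Real.rpow_le_rpow hu.le h2 (by linarith)
    have hup : 0 < u ^ (-κ) := Real.rpow_pos_of_pos hu _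
    have h4 : (M ^ (-κ))⁻¹ ≤ (u ^ (-κ))⁻¹ := inv_anti₀ hup h3
    rw [Real.rpow_neg hu.le, Real.rpow_neg (by linarith : (0:ℝ) ≤ M), inv_inv, inv_inv] at h4
    exact le_trans (min_le_right _ _) h4

lemma aux_rpow_le_max {m M u κ : ℝ} (hm : 0 < m) (h1 : m ≤ u) (h2 : u ≤ M) :
    u ^ κ ≤ max (m ^ κ) (M ^ κ) := by
  rcases le_or_gt 0 κ with hκ | hκ
  · exact le_trans (Real.rpow_le_rpow (lt_of_lt_of_le hm h1).le h2 hκ) (le_max_right _ _)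
  · have hu : 0 < u := lt_of_lt_of_le hm h1
    have h3 : m ^ (-κ) ≤ u ^ (-κ) := Real.rpow_le_rpow hm.le h1 (by linarith)
    have hmp : 0 < m ^ (-κ) := Real.rpow_pos_of_pos hm _
    have h4 : (u ^ (-κ))⁻¹ ≤ (m ^ (-κ))⁻¹ := inv_anti₀ hmp h3
    rw [Real.rpow_neg hu.le, Real.rpow_neg hm.le, inv_inv, inv_inv] at h4
    exact le_trans h4 (le_max_left _ _)

lemma aux_min_pos {m M κ κ' : ℝ} (hm : 0 < m) (hM : 0 < M) : 0 < min (m ^ κ) (M ^ κ') :=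
  lt_min (Real.rpow_pos_of_pos hm _) (Real.rpow_pos_of_pos hM _)

lemma aux_rpow_scaled_lb {X base κ m M : ℝ} (hX : 0 < X) (hm : 0 < m)
    (h1 : m * X ≤ base) (h2 : base ≤ M * X) :
    X ^ κ * min (m ^ κ) (M ^ κ) ≤ base ^ κ := by
  have hM : 0 < M := by nlinarith
  have h := aux_rpow_min_le (κ := κ) (mul_pos hm hX) h1 h2
  rw [Real.mul_rpow hm.le hX.le, Real.mul_rpow hM.le hX.le] at h
  calc X ^ κ * min (m ^ κ) (M ^ κ)
      = min (m ^ κ * X ^ κ) (M ^ κ * X ^ κ) := by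
        rw [mul_comm, min_mul_of_nonneg _ _ (Real.rpow_nonneg hX.le κ)]
    _ ≤ base ^ κ := h

/-- monotone lintegral bound over subinterval -/
lemma aux_lint_lb {A B A' B' : ℝ} {F G : ℝ → ℝ} (hsub : Set.Ioo A' B' ⊆ Set.Ioo A B)
    (hle : ∀ z ∈ Set.Ioo A' B', G z ≤ F z) :
    ∫⁻ z in Set.Ioo A' B', ENNReal.ofReal (G z) ≤ ∫⁻ z in Set.Ioo A B, ENNReal.ofReal (F z) := by
  refine le_trans (lintegral_mono_ae ?_) (lintegral_mono_set hsub)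
  rw [ae_restrict_iff' measurableSet_Ioo]
  exact ae_of_all _ fun z hz => ENNReal.ofReal_le_ofReal (hle z hz)

/-- the ε-family contradiction -/
lemma aux_no_bound {c K s : ℝ} (hc : 0 < c) (hs : 0 < s)
    (h : ∀ ε : ℝ, 0 < ε → ε < 1 → c ≤ K * ε ^ s) : False := by
  rcases le_or_gt K 0 with hK | hK
  · have h2 := h (1/2) (by norm_num) (by norm_num)
    have h3 : (0:ℝ) < (1/2 : ℝ) ^ s := Real.rpow_pos_of_pos (by norm_num) _
    nlinarith
  · set ε := min (1/2) ((c / (2 * K)) ^ s⁻¹) with hε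
    have hcK : 0 < c / (2 * K) := by positivity
    have hεpos : 0 < ε := lt_min (by norm_num) (Real.rpow_pos_of_pos hcK _)
    have hεlt : ε < 1 := lt_of_le_of_lt (min_le_left _ _) (by norm_num)
    have h2 := h ε hεpos hεlt
    have h3 : ε ^ s ≤ c / (2 * K) := by
      calc ε ^ s ≤ ((c / (2 * K)) ^ s⁻¹) ^ s :=
            Real.rpow_le_rpow hεpos.le (min_le_right _ _) hs.le
        _ = c / (2 * K) := by
            rw [← Real.rpow_mul hcK.le, inv_mul_cancel₀ hs.ne', Real.rpow_one]
    have h4 : K * ε ^ s ≤ c / 2 := by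
      have : K * ε ^ s ≤ K * (c / (2 * K)) := by
        exact mul_le_mul_of_nonneg_left h3 hK.le
      calc K * ε ^ s ≤ K * (c / (2 * K)) := this
        _ = c / 2 := by field_simp
    linarith

lemma aux_no_bound' {c K s : ℝ} (hc : 0 < c) (hs : s < 0)
    (h : ∀ ε : ℝ, 0 < ε → ε < 1 → c * ε ^ s ≤ K) : False := by
  refine aux_no_bound (K := K) hc (neg_pos.mpr hs) (fun ε hε hε1 => ?_)
  have h2 := h ε hε hε1
  have h3 : (0:ℝ) < ε ^ (-s) := Real.rpow_pos_of_pos hε _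
  have h4 : ε ^ s * ε ^ (-s) = 1 := by
    rw [← Real.rpow_add hε]; simp
  nlinarith

/-- exact lintegral of rpow on (0, B) -/
lemma aux_lint_rpow {e B : ℝ} (he : -1 < e) (hB : 0 < B) :
    ∫⁻ z in Set.Ioo (0:ℝ) B, ENNReal.ofReal (z ^ e) = ENNReal.ofReal (B ^ (e+1) / (e+1)) := by
  have hint : IntegrableOn (fun z : ℝ => z ^ e) (Set.Ioo 0 B) := by
    have := (intervalIntegral.intervalIntegrable_rpow' (a := 0) (b := B) he)
    exact ((intervalIntegrable_iff_integrableOn_Ioc_of_le hB.le).mp this).mono_set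
      Set.Ioo_subset_Ioc_self
  rw [← ofReal_integral_eq_lintegral_ofReal hint ?nn]
  case nn =>
    rw [Filter.EventuallyLE]
    rw [ae_restrict_iff' measurableSet_Ioo]
    exact ae_of_all _ fun z hz => Real.rpow_nonneg hz.1.le e
  congr 1
  rw [← integral_Ioc_eq_integral_Ioo, ← intervalIntegral.integral_of_le hB.le,
    integral_rpow (Or.inl he), Real.zero_rpow (by linarith), sub_zero]

lemma aux_eps_step {p C c W R : ℝ} (hp : 1 < p) (hc : 0 < c) (hW : 0 < W) (hR : 0 < R)
    (hineq : ∀ ε : ℝ, 0 < ε → ε < 1 → c * ε⁻¹ * W ≤ C * (R / ε) ^ (1/p)) : False := by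
  have hp0 : (0:ℝ) < p := by linarith
  have hs : (0:ℝ) < 1 - 1/p := by
    have : 1/p < 1 := by rw [div_lt_one hp0]; exact hp
    linarith
  refine aux_no_bound (c := c * W) (K := C * R ^ (1/p)) (s := 1 - 1/p)
    (by positivity) hs (fun ε hε hε1 => ?_)
  have h2 := hineq ε hε hε1
  have h3 : (R/ε) ^ (1/p) = R ^ (1/p) * (ε ^ (1/p))⁻¹ := by
    rw [div_eq_mul_inv, Real.mul_rpow hR.le (inv_nonneg.mpr hε.le), Real.inv_rpow hε.le]
  have h4 : ε ^ (1 - 1/p) * ε ^ (1/p) = ε := by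
    rw [← Real.rpow_add hε]; norm_num
  have hu : (0:ℝ) < ε ^ (1/p) := Real.rpow_pos_of_pos hε _
  have h5 : (ε ^ (1/p))⁻¹ * ε = ε ^ (1 - 1/p) := by
    rw [Real.rpow_sub hε, Real.rpow_one, inv_mul_eq_div]
  calc c * W = (c * ε⁻¹ * W) * ε := by field_simp
    _ ≤ (C * (R/ε) ^ (1/p)) * ε := mul_le_mul_of_nonneg_right h2 hε.le
    _ = (C * R ^ (1/p)) * ((ε ^ (1/p))⁻¹ * ε) := by rw [h3]; ring
    _ = (C * R ^ (1/p)) * ε ^ (1 - 1/p) := by rw [h5]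

lemma aux_pow_step {C c M q r : ℝ} (hc : 0 < c) (hM : 0 < M) (hqr : q < r)
    (hineq : ∀ ε : ℝ, 0 < ε → ε < 1 → c * ε ^ q ≤ C * (M * ε) ^ r) : False := by
  refine aux_no_bound' (c := c) (K := C * M ^ r) (s := q - r) hc (by linarith)
    (fun ε hε hε1 => ?_)
  have h2 := hineq ε hε hε1
  have hεr : (0:ℝ) < ε ^ r := Real.rpow_pos_of_pos hε _
  refine le_of_mul_le_mul_right ?_ hεr
  calc c * ε ^ (q - r) * ε ^ r = c * ε ^ q := by
        rw [mul_assoc, ← Real.rpow_add hε]; ring_nf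
    _ ≤ C * (M * ε) ^ r := h2
    _ = C * M ^ r * ε ^ r := by rw [Real.mul_rpow hM.le hε.le, mul_assoc]

lemma aux_extract {C : ℝ≥0} {L R : ℝ} (hR : 0 ≤ R)
    (h1 : ENNReal.ofReal L ≤ (C : ℝ≥0∞) * ENNReal.ofReal R) : L ≤ C * R := by
  rw [← ENNReal.ofReal_coe_nnreal, ← ENNReal.ofReal_mul C.coe_nonneg] at h1
  exact (ENNReal.ofReal_le_ofReal_iff (mul_nonneg C.coe_nonneg hR)).mp h1

noncomputable def U1 (a b t : ℝ) (f : ℝ → ℝ) (x : ℝ) : ℝ≥0∞ :=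
  ENNReal.ofReal (x ^ (-(2*a) - b) * t ^ (-(2*a) - 2*b)) *
    ∫⁻ z in Set.Ioo |t - x| (t + x),
      ENNReal.ofReal ((((x + t) ^ 2 - z ^ 2) * (z ^ 2 - (x - t) ^ 2)) ^ (a + b - 1/2) *
        z ^ (1 - b) * f z)

noncomputable def U2 (a b t : ℝ) (f : ℝ → ℝ) (x : ℝ) : ℝ≥0∞ :=
  ENNReal.ofReal (x ^ (-a - 1/2) * t ^ (-(2*a) - 2*b)) *
    ∫⁻ z in Set.Ioo |t - x| (t + x),
      ENNReal.ofReal ((t ^ 2 - (x - z) ^ 2) ^ (a + b - 1/2) * z ^ (a + 1/2) * f z)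

noncomputable def U2t (a b t : ℝ) (f : ℝ → ℝ) (x : ℝ) : ℝ≥0∞ :=
  ENNReal.ofReal (x ^ (-a - 1/2) * t ^ (-(2*a) - 2*b)) *
    ∫⁻ z in Set.Ioo |t - x| (t + x),
      ENNReal.ofReal ((t ^ 2 - (x - z) ^ 2) ^ (a + b - 1/2) *
        Real.log (8 * x * z / ((x + z) ^ 2 - t ^ 2)) * z ^ (a + 1/2) * f z)

noncomputable def Ustar1 (a b : ℝ) (f : ℝ → ℝ) (x : ℝ) : ℝ≥0∞ :=
  ⨆ t ∈ Set.Ioi (0 : ℝ), U1 a b t f x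

noncomputable def Ustar2 (a b : ℝ) (f : ℝ → ℝ) (x : ℝ) : ℝ≥0∞ :=
  ⨆ t ∈ Set.Ioi (0 : ℝ), U2 a b t f x

noncomputable def Ustar2t (a b : ℝ) (f : ℝ → ℝ) (x : ℝ) : ℝ≥0∞ :=
  ⨆ t ∈ Set.Ioi (0 : ℝ), U2t a b t f x

noncomputable def wNorm (p δ : ℝ) (g : ℝ → ℝ≥0∞) : ℝ≥0∞ :=
  (∫⁻ x in Set.Ioi (0 : ℝ), g x ^ p * ENNReal.ofReal (x ^ δ)) ^ (1 / p)

noncomputable def wNormR (p δ : ℝ) (f : ℝ → ℝ) : ℝ≥0∞ :=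
  wNorm p δ fun x => ENNReal.ofReal |f x|

lemma aux_wNorm_lb {p δ : ℝ} (hp : 0 < p) {g : ℝ → ℝ≥0∞} {A B L wlb : ℝ}
    (hA : 0 ≤ A) (hAB : A < B) (hL : 0 ≤ L) (hwlb : 0 ≤ wlb)
    (hg : ∀ x ∈ Set.Ioo A B, ENNReal.ofReal L ≤ g x)
    (hw : ∀ x ∈ Set.Ioo A B, wlb ≤ x ^ δ) :
    ENNReal.ofReal (L * (wlb * (B - A)) ^ (1/p)) ≤ wNorm p δ g := by
  have key : ENNReal.ofReal (L ^ p * (wlb * (B - A)))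
      ≤ ∫⁻ x in Set.Ioi (0:ℝ), g x ^ p * ENNReal.ofReal (x ^ δ) := by
    have hsub : Set.Ioo A B ⊆ Set.Ioi (0:ℝ) := fun x hx => lt_of_le_of_lt hA hx.1
    refine le_trans ?_ (lintegral_mono_set hsub)
    have hpt : ∀ x ∈ Set.Ioo A B,
        ENNReal.ofReal (L ^ p * wlb) ≤ g x ^ p * ENNReal.ofReal (x ^ δ) := by
      intro x hx
      rw [ENNReal.ofReal_mul (by positivity)]
      refine mul_le_mul' ?_ (ENNReal.ofReal_le_ofReal (hw x hx))
      rw [← ENNReal.ofReal_rpow_of_nonneg hL hp.le]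
      exact ENNReal.rpow_le_rpow (hg x hx) hp.le
    calc ENNReal.ofReal (L ^ p * (wlb * (B - A)))
        = ENNReal.ofReal (L ^ p * wlb) * ENNReal.ofReal (B - A) := by
          rw [← ENNReal.ofReal_mul (by positivity), mul_assoc]
      _ = ∫⁻ _x in Set.Ioo A B, ENNReal.ofReal (L ^ p * wlb) := by
          rw [setLIntegral_const, Real.volume_Ioo]
      _ ≤ ∫⁻ x in Set.Ioo A B, g x ^ p * ENNReal.ofReal (x ^ δ) := by
          refine lintegral_mono_ae ?_
          rw [ae_restrict_iff' measurableSet_Ioo]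
          exact ae_of_all _ hpt
  have h2 := ENNReal.rpow_le_rpow key (by positivity : (0:ℝ) ≤ 1/p)
  rw [ENNReal.ofReal_rpow_of_nonneg
    (mul_nonneg (Real.rpow_nonneg hL p) (mul_nonneg hwlb (by linarith))) (by positivity)] at h2
  rw [wNorm]
  refine le_trans (le_of_eq (congrArg ENNReal.ofReal ?_)) h2
  symm
  rw [Real.mul_rpow (by positivity) (mul_nonneg hwlb (by linarith)), ← Real.rpow_mul hL,
    mul_one_div_cancel hp.ne', Real.rpow_one]

lemma aux_wNormR_ub {p δ : ℝ} (hp : 0 < p) {f : ℝ → ℝ} {A B : ℝ} {G : ℝ → ℝ} (hA : 0 ≤ A)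
    (h : ∀ x ∈ Set.Ioi (0:ℝ), (ENNReal.ofReal |f x|) ^ p * ENNReal.ofReal (x ^ δ)
      ≤ (Set.Ioo A B).indicator (fun z => ENNReal.ofReal (G z)) x) :
    wNormR p δ f ≤ (∫⁻ z in Set.Ioo A B, ENNReal.ofReal (G z)) ^ (1/p) := by
  rw [wNormR, wNorm]
  refine ENNReal.rpow_le_rpow ?_ (by positivity)
  calc ∫⁻ x in Set.Ioi (0:ℝ), (ENNReal.ofReal |f x|) ^ p * ENNReal.ofReal (x ^ δ)
      ≤ ∫⁻ x in Set.Ioi (0:ℝ), (Set.Ioo A B).indicator (fun z => ENNReal.ofReal (G z)) x := by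
        refine lintegral_mono_ae ?_
        rw [ae_restrict_iff' measurableSet_Ioi]
        exact ae_of_all _ h
    _ = ∫⁻ x in Set.Ioo A B, ENNReal.ofReal (G x) ∂(volume.restrict (Set.Ioi 0)) := by
        rw [lintegral_indicator measurableSet_Ioo]
    _ = ∫⁻ x in Set.Ioo A B, ENNReal.ofReal (G x) := by
        have hsub : Set.Ioo A B ⊆ Set.Ioi (0:ℝ) := fun x hx => lt_of_le_of_lt hA hx.1
        rw [Measure.restrict_restrict measurableSet_Ioo, Set.inter_eq_self_of_subset_left hsub]

lemma aux_lint_two_sub {e : ℝ} (he : -1 < e) :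
    ∫⁻ z in Set.Ioo (3/2 : ℝ) 2, ENNReal.ofReal ((2 - z) ^ e)
      = ENNReal.ofReal ((1/2 : ℝ) ^ (e+1) / (e+1)) := by
  have hii : IntervalIntegrable (fun x : ℝ => (2 - x) ^ e) volume (3/2) 2 := by
    have h0 := (intervalIntegral.intervalIntegrable_rpow' (a := 0) (b := 1/2) he)
    have h1 := h0.comp_sub_left 2
    norm_num at h1
    exact h1.symm
  have hint : IntegrableOn (fun z : ℝ => (2 - z) ^ e) (Set.Ioo (3/2) 2) := by
    exact ((intervalIntegrable_iff_integrableOn_Ioc_of_le (by norm_num)).mp hii).mono_set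
      Set.Ioo_subset_Ioc_self
  rw [← ofReal_integral_eq_lintegral_ofReal hint ?nn]
  case nn =>
    rw [Filter.EventuallyLE, ae_restrict_iff' measurableSet_Ioo]
    exact ae_of_all _ fun z hz => Real.rpow_nonneg (by linarith [hz.2]) e
  congr 1
  rw [← integral_Ioc_eq_integral_Ioo, ← intervalIntegral.integral_of_le (by norm_num : (3/2:ℝ) ≤ 2),
    intervalIntegral.integral_comp_sub_left (fun s => s ^ e) 2]
  norm_num
  rw [integral_rpow (Or.inl he), Real.zero_rpow (by linarith), sub_zero]

lemma aux_U2t_ge (a b : ℝ) {t x : ℝ} (hx : 0 < x) (ht : 0 < t) {f : ℝ → ℝ}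
    (hf : ∀ z, 0 ≤ f z) :
    ENNReal.ofReal (Real.log 2) * U2 a b t f x ≤ U2t a b t f x := by
  rw [U2, U2t, ← mul_assoc, mul_comm (ENNReal.ofReal (Real.log 2)), mul_assoc]
  refine mul_le_mul' le_rfl ?_
  rw [← lintegral_const_mul' _ _ ENNReal.ofReal_ne_top]
  refine lintegral_mono_ae ?_
  rw [ae_restrict_iff' measurableSet_Ioo]
  refine ae_of_all _ fun z hz => ?_
  obtain ⟨hz1, hz2⟩ := hz
  have hz0 : 0 < z := lt_of_le_of_lt (abs_nonneg _) hz1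
  have h1 : t - x < z := lt_of_le_of_lt (le_abs_self _) hz1
  have h2 : x - t < z := by
    have := le_abs_self (x - t); rw [abs_sub_comm] at this; exact lt_of_le_of_lt this hz1
  have hden : 0 < (x + z) ^ 2 - t ^ 2 := by nlinarith
  have hsq : (x - z) ^ 2 < t ^ 2 := by nlinarith
  have hratio : 2 ≤ 8 * x * z / ((x + z) ^ 2 - t ^ 2) := by
    rw [le_div_iff₀ hden]; nlinarith
  have hlog : Real.log 2 ≤ Real.log (8 * x * z / ((x + z) ^ 2 - t ^ 2)) :=
    Real.log_le_log (by norm_num) hratio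
  have hk : 0 ≤ (t ^ 2 - (x - z) ^ 2) ^ (a + b - 1/2) := Real.rpow_nonneg (by nlinarith) _
  have hw : 0 ≤ z ^ (a + 1/2) := Real.rpow_nonneg hz0.le _
  rw [← ENNReal.ofReal_mul (Real.log_nonneg (by norm_num))]
  refine ENNReal.ofReal_le_ofReal ?_
  calc Real.log 2 * ((t ^ 2 - (x - z) ^ 2) ^ (a + b - 1/2) * z ^ (a + 1/2) * f z)
      ≤ Real.log (8 * x * z / ((x + z) ^ 2 - t ^ 2))
          * ((t ^ 2 - (x - z) ^ 2) ^ (a + b - 1/2) * z ^ (a + 1/2) * f z) :=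
        mul_le_mul_of_nonneg_right hlog (mul_nonneg (mul_nonneg hk hw) (hf z))
    _ = (t ^ 2 - (x - z) ^ 2) ^ (a + b - 1/2)
          * Real.log (8 * x * z / ((x + z) ^ 2 - t ^ 2)) * z ^ (a + 1/2) * f z := by ring

lemma aux_U1_core1 (a b : ℝ) : ∃ c : ℝ, 0 < c ∧ ∀ (f : ℝ → ℝ), (∀ z, 0 ≤ f z) →
    ∀ x ∈ Set.Ioo (1:ℝ) 2,
    ENNReal.ofReal c * ∫⁻ z in Set.Ioo (0:ℝ) 1, ENNReal.ofReal (z ^ (2*a+b) * f z)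
      ≤ U1 a b x f x := by
  have hc1 : (0:ℝ) < min ((1:ℝ) ^ (-(2*a) - b)) (2 ^ (-(2*a) - b)) := by
    exact lt_min (Real.rpow_pos_of_pos one_pos _) (Real.rpow_pos_of_pos two_pos _)
  have hc2 : (0:ℝ) < min ((1:ℝ) ^ (-(2*a) - 2*b)) (2 ^ (-(2*a) - 2*b)) := by
    exact lt_min (Real.rpow_pos_of_pos one_pos _) (Real.rpow_pos_of_pos two_pos _)
  have hc3 : (0:ℝ) < min ((3:ℝ) ^ (a + b - 1/2)) (16 ^ (a + b - 1/2)) := by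
    exact lt_min (Real.rpow_pos_of_pos (by norm_num) _) (Real.rpow_pos_of_pos (by norm_num) _)
  refine ⟨(min ((1:ℝ) ^ (-(2*a) - b)) (2 ^ (-(2*a) - b))
      * min ((1:ℝ) ^ (-(2*a) - 2*b)) (2 ^ (-(2*a) - 2*b)))
      * min ((3:ℝ) ^ (a + b - 1/2)) (16 ^ (a + b - 1/2)), mul_pos (mul_pos hc1 hc2) hc3, ?_⟩
  intro f hf x hx
  obtain ⟨hx1, hx2⟩ := hx
  have hx0 : (0:ℝ) < x := by linarith
  rw [U1, sub_self, abs_zero]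
  have hpre : min ((1:ℝ) ^ (-(2*a) - b)) (2 ^ (-(2*a) - b))
      * min ((1:ℝ) ^ (-(2*a) - 2*b)) (2 ^ (-(2*a) - 2*b))
      ≤ x ^ (-(2*a) - b) * x ^ (-(2*a) - 2*b) :=
    mul_le_mul (aux_rpow_min_le one_pos hx1.le hx2.le)
      (aux_rpow_min_le one_pos hx1.le hx2.le) hc2.le (Real.rpow_nonneg hx0.le _)
  have hinner : ∫⁻ z in Set.Ioo (0:ℝ) 1,
      ENNReal.ofReal (min ((3:ℝ) ^ (a + b - 1/2)) (16 ^ (a + b - 1/2))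
        * (z ^ (2*a+b) * f z))
      ≤ ∫⁻ z in Set.Ioo (0:ℝ) (x + x),
        ENNReal.ofReal ((((x + x) ^ 2 - z ^ 2) * (z ^ 2 - (0:ℝ) ^ 2)) ^ (a + b - 1/2)
          * z ^ (1 - b) * f z) := by
    refine aux_lint_lb (fun z hz => ⟨hz.1, by linarith [hz.2]⟩) (fun z hz => ?_)
    obtain ⟨hz0, hz1⟩ := hz
    have hXpos : (0:ℝ) < z ^ 2 := by positivity
    have hbl : 3 * z ^ 2 ≤ ((x + x) ^ 2 - z ^ 2) * (z ^ 2 - (0:ℝ) ^ 2) := by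
      nlinarith [mul_pos hXpos (show (0:ℝ) < 4*x^2 - z^2 - 3 by nlinarith)]
    have hbu : ((x + x) ^ 2 - z ^ 2) * (z ^ 2 - (0:ℝ) ^ 2) ≤ 16 * z ^ 2 := by
      nlinarith [mul_pos hXpos (show (0:ℝ) < 16 - 4*x^2 + z^2 by nlinarith)]
    have hB := aux_rpow_scaled_lb (κ := a + b - 1/2) hXpos (by norm_num) hbl hbu
    have hzz : (z ^ 2 : ℝ) ^ (a + b - 1/2) * z ^ (1 - b) = z ^ (2*a + b) := by
      rw [show (z:ℝ)^2 = z ^ (2:ℝ) by rw [← Real.rpow_natCast z 2]; norm_num,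
        ← Real.rpow_mul hz0.le, ← Real.rpow_add hz0]
      congr 1; ring
    have step : min ((3:ℝ) ^ (a + b - 1/2)) (16 ^ (a + b - 1/2)) * z ^ (2*a+b)
        ≤ (((x + x) ^ 2 - z ^ 2) * (z ^ 2 - (0:ℝ) ^ 2)) ^ (a + b - 1/2) * z ^ (1 - b) := by
      calc min ((3:ℝ) ^ (a + b - 1/2)) (16 ^ (a + b - 1/2)) * z ^ (2*a+b)
          = min ((3:ℝ) ^ (a + b - 1/2)) (16 ^ (a + b - 1/2))
            * ((z ^ 2 : ℝ) ^ (a + b - 1/2) * z ^ (1 - b)) := by rw [hzz]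
        _ = (z ^ 2 : ℝ) ^ (a + b - 1/2) * min ((3:ℝ) ^ (a + b - 1/2)) (16 ^ (a + b - 1/2))
            * z ^ (1 - b) := by ring
        _ ≤ _ := mul_le_mul_of_nonneg_right hB (Real.rpow_nonneg hz0.le _)
    calc min ((3:ℝ) ^ (a + b - 1/2)) (16 ^ (a + b - 1/2)) * (z ^ (2*a+b) * f z)
        = min ((3:ℝ) ^ (a + b - 1/2)) (16 ^ (a + b - 1/2)) * z ^ (2*a+b) * f z := by ring
      _ ≤ _ := mul_le_mul_of_nonneg_right step (hf z)

  calc ENNReal.ofReal ((min ((1:ℝ) ^ (-(2*a) - b)) (2 ^ (-(2*a) - b))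
      * min ((1:ℝ) ^ (-(2*a) - 2*b)) (2 ^ (-(2*a) - 2*b)))
      * min ((3:ℝ) ^ (a + b - 1/2)) (16 ^ (a + b - 1/2)))
      * ∫⁻ z in Set.Ioo (0:ℝ) 1, ENNReal.ofReal (z ^ (2*a+b) * f z)
      = ENNReal.ofReal (min ((1:ℝ) ^ (-(2*a) - b)) (2 ^ (-(2*a) - b))
          * min ((1:ℝ) ^ (-(2*a) - 2*b)) (2 ^ (-(2*a) - 2*b)))
        * ∫⁻ z in Set.Ioo (0:ℝ) 1,
            ENNReal.ofReal (min ((3:ℝ) ^ (a + b - 1/2)) (16 ^ (a + b - 1/2))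
              * (z ^ (2*a+b) * f z)) := by
        rw [ENNReal.ofReal_mul (by positivity), mul_assoc]
        congr 1
        rw [← lintegral_const_mul' _ _ ENNReal.ofReal_ne_top]
        exact lintegral_congr fun z => (ENNReal.ofReal_mul hc3.le).symm
    _ ≤ _ := mul_le_mul' (ENNReal.ofReal_le_ofReal hpre) hinner

lemma aux_U2_core1 (a b : ℝ) : ∃ c : ℝ, 0 < c ∧ ∀ (f : ℝ → ℝ), (∀ z, 0 ≤ f z) →
    ∀ x ∈ Set.Ioo (1:ℝ) 2,
    ENNReal.ofReal c * ∫⁻ z in Set.Ioo (0:ℝ) 1, ENNReal.ofReal (z ^ (2*a+b) * f z)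
      ≤ U2 a b x f x := by
  have hc1 : (0:ℝ) < min ((1:ℝ) ^ (-a - 1/2)) (2 ^ (-a - 1/2)) := aux_min_pos one_pos two_pos
  have hc2 : (0:ℝ) < min ((1:ℝ) ^ (-(2*a) - 2*b)) (2 ^ (-(2*a) - 2*b)) :=
    aux_min_pos one_pos two_pos
  have hc3 : (0:ℝ) < min ((1:ℝ) ^ (a + b - 1/2)) (4 ^ (a + b - 1/2)) :=
    aux_min_pos one_pos (by norm_num)
  refine ⟨(min ((1:ℝ) ^ (-a - 1/2)) (2 ^ (-a - 1/2))
      * min ((1:ℝ) ^ (-(2*a) - 2*b)) (2 ^ (-(2*a) - 2*b)))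
      * min ((1:ℝ) ^ (a + b - 1/2)) (4 ^ (a + b - 1/2)), mul_pos (mul_pos hc1 hc2) hc3, ?_⟩
  intro f hf x hx
  obtain ⟨hx1, hx2⟩ := hx
  have hx0 : (0:ℝ) < x := by linarith
  rw [U2, sub_self, abs_zero]
  have hpre : min ((1:ℝ) ^ (-a - 1/2)) (2 ^ (-a - 1/2))
      * min ((1:ℝ) ^ (-(2*a) - 2*b)) (2 ^ (-(2*a) - 2*b))
      ≤ x ^ (-a - 1/2) * x ^ (-(2*a) - 2*b) :=
    mul_le_mul (aux_rpow_min_le one_pos hx1.le hx2.le)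
      (aux_rpow_min_le one_pos hx1.le hx2.le) hc2.le (Real.rpow_nonneg hx0.le _)
  have hinner : ∫⁻ z in Set.Ioo (0:ℝ) 1,
      ENNReal.ofReal (min ((1:ℝ) ^ (a + b - 1/2)) (4 ^ (a + b - 1/2)) * (z ^ (2*a+b) * f z))
      ≤ ∫⁻ z in Set.Ioo (0:ℝ) (x + x),
        ENNReal.ofReal ((x ^ 2 - (x - z) ^ 2) ^ (a + b - 1/2) * z ^ (a + 1/2) * f z) := by
    refine aux_lint_lb (fun z hz => ⟨hz.1, by linarith [hz.2]⟩) (fun z hz => ?_)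
    obtain ⟨hz0, hz1⟩ := hz
    have hbl : 1 * z ≤ x ^ 2 - (x - z) ^ 2 := by
      nlinarith [mul_pos hz0 (show (0:ℝ) < 2*x - z - 1 by nlinarith)]
    have hbu : x ^ 2 - (x - z) ^ 2 ≤ 4 * z := by
      nlinarith [mul_pos hz0 (show (0:ℝ) < 4 - 2*x + z by nlinarith)]
    have hB := aux_rpow_scaled_lb (κ := a + b - 1/2) hz0 one_pos hbl hbu
    have hzz : (z:ℝ) ^ (a + b - 1/2) * z ^ (a + 1/2) = z ^ (2*a + b) := by
      rw [← Real.rpow_add hz0]; congr 1; ring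
    have step : min ((1:ℝ) ^ (a + b - 1/2)) (4 ^ (a + b - 1/2)) * z ^ (2*a+b)
        ≤ (x ^ 2 - (x - z) ^ 2) ^ (a + b - 1/2) * z ^ (a + 1/2) := by
      calc min ((1:ℝ) ^ (a + b - 1/2)) (4 ^ (a + b - 1/2)) * z ^ (2*a+b)
          = min ((1:ℝ) ^ (a + b - 1/2)) (4 ^ (a + b - 1/2))
            * ((z:ℝ) ^ (a + b - 1/2) * z ^ (a + 1/2)) := by rw [hzz]
        _ = (z:ℝ) ^ (a + b - 1/2) * min ((1:ℝ) ^ (a + b - 1/2)) (4 ^ (a + b - 1/2))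
            * z ^ (a + 1/2) := by ring
        _ ≤ _ := mul_le_mul_of_nonneg_right hB (Real.rpow_nonneg hz0.le _)
    calc min ((1:ℝ) ^ (a + b - 1/2)) (4 ^ (a + b - 1/2)) * (z ^ (2*a+b) * f z)
        = min ((1:ℝ) ^ (a + b - 1/2)) (4 ^ (a + b - 1/2)) * z ^ (2*a+b) * f z := by ring
      _ ≤ _ := mul_le_mul_of_nonneg_right step (hf z)
  calc ENNReal.ofReal ((min ((1:ℝ) ^ (-a - 1/2)) (2 ^ (-a - 1/2))
      * min ((1:ℝ) ^ (-(2*a) - 2*b)) (2 ^ (-(2*a) - 2*b)))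
      * min ((1:ℝ) ^ (a + b - 1/2)) (4 ^ (a + b - 1/2)))
      * ∫⁻ z in Set.Ioo (0:ℝ) 1, ENNReal.ofReal (z ^ (2*a+b) * f z)
      = ENNReal.ofReal (min ((1:ℝ) ^ (-a - 1/2)) (2 ^ (-a - 1/2))
          * min ((1:ℝ) ^ (-(2*a) - 2*b)) (2 ^ (-(2*a) - 2*b)))
        * ∫⁻ z in Set.Ioo (0:ℝ) 1,
            ENNReal.ofReal (min ((1:ℝ) ^ (a + b - 1/2)) (4 ^ (a + b - 1/2))
              * (z ^ (2*a+b) * f z)) := by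
        rw [ENNReal.ofReal_mul (mul_pos hc1 hc2).le, mul_assoc]
        congr 1
        rw [← lintegral_const_mul' _ _ ENNReal.ofReal_ne_top]
        exact lintegral_congr fun z => (ENNReal.ofReal_mul hc3.le).symm
    _ ≤ _ := mul_le_mul' (ENNReal.ofReal_le_ofReal hpre) hinner

lemma aux_U1_core2 (a b : ℝ) : ∃ c : ℝ, 0 < c ∧ ∀ (f : ℝ → ℝ), (∀ z, 0 ≤ f z) →
    ∀ x ∈ Set.Ioo (1/2:ℝ) 1,
    ENNReal.ofReal c * ∫⁻ z in Set.Ioo (3/2:ℝ) 2, ENNReal.ofReal ((2 - z) ^ (a+b-1/2) * f z)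
      ≤ U1 a b (2 - x) f x := by
  have hc1 : (0:ℝ) < min ((1/2:ℝ) ^ (-(2*a) - b)) ((1:ℝ) ^ (-(2*a) - b)) :=
    aux_min_pos (by norm_num) one_pos
  have hc2 : (0:ℝ) < min ((1:ℝ) ^ (-(2*a) - 2*b)) ((3/2:ℝ) ^ (-(2*a) - 2*b)) :=
    aux_min_pos one_pos (by norm_num)
  have hc3 : (0:ℝ) < min ((2:ℝ) ^ (a + b - 1/2)) ((32:ℝ) ^ (a + b - 1/2)) :=
    aux_min_pos two_pos (by norm_num)
  have hc4 : (0:ℝ) < min ((3/2:ℝ) ^ (1 - b)) ((2:ℝ) ^ (1 - b)) :=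
    aux_min_pos (by norm_num) two_pos
  refine ⟨(min ((1/2:ℝ) ^ (-(2*a) - b)) ((1:ℝ) ^ (-(2*a) - b))
      * min ((1:ℝ) ^ (-(2*a) - 2*b)) ((3/2:ℝ) ^ (-(2*a) - 2*b)))
      * (min ((2:ℝ) ^ (a + b - 1/2)) ((32:ℝ) ^ (a + b - 1/2))
        * min ((3/2:ℝ) ^ (1 - b)) ((2:ℝ) ^ (1 - b))),
    mul_pos (mul_pos hc1 hc2) (mul_pos hc3 hc4), ?_⟩
  intro f hf x hx
  obtain ⟨hx1, hx2⟩ := hx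
  have hx0 : (0:ℝ) < x := by linarith
  rw [U1, show (2:ℝ) - x + x = 2 by ring,
    abs_of_pos (show (0:ℝ) < 2 - x - x by linarith),
    show x + (2 - x) = (2:ℝ) by ring, show x - (2 - x) = 2*x - (2:ℝ) by ring]
  have hpre : min ((1/2:ℝ) ^ (-(2*a) - b)) ((1:ℝ) ^ (-(2*a) - b))
      * min ((1:ℝ) ^ (-(2*a) - 2*b)) ((3/2:ℝ) ^ (-(2*a) - 2*b))
      ≤ x ^ (-(2*a) - b) * (2 - x) ^ (-(2*a) - 2*b) :=
    mul_le_mul (aux_rpow_min_le (by norm_num) hx1.le hx2.le)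
      (aux_rpow_min_le one_pos (by linarith) (by linarith)) hc2.le
      (Real.rpow_nonneg hx0.le _)
  have hinner : ∫⁻ z in Set.Ioo (3/2:ℝ) 2,
      ENNReal.ofReal ((min ((2:ℝ) ^ (a + b - 1/2)) ((32:ℝ) ^ (a + b - 1/2))
        * min ((3/2:ℝ) ^ (1 - b)) ((2:ℝ) ^ (1 - b))) * ((2 - z) ^ (a+b-1/2) * f z))
      ≤ ∫⁻ z in Set.Ioo (2 - x - x) 2,
        ENNReal.ofReal ((((2:ℝ) ^ 2 - z ^ 2) * (z ^ 2 - (2*x - 2) ^ 2)) ^ (a + b - 1/2)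
          * z ^ (1 - b) * f z) := by
    refine aux_lint_lb (fun z hz => ⟨by linarith [hz.1], hz.2⟩) (fun z hz => ?_)
    obtain ⟨hz1, hz2⟩ := hz
    have hX : (0:ℝ) < 2 - z := by linarith
    have hsq : (2*x - 2) ^ 2 < 1 := by
      nlinarith [mul_pos (show (0:ℝ) < 2*x - 1 by linarith) (show (0:ℝ) < 3 - 2*x by linarith)]
    have h5 : (5/4:ℝ) ≤ z ^ 2 - (2*x - 2) ^ 2 := by nlinarith
    have h7 : z ^ 2 - (2*x - 2) ^ 2 ≤ 4 := by nlinarith [sq_nonneg (2*x - 2)]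
    have hu : (35/8:ℝ) ≤ (2 + z) * (z ^ 2 - (2*x - 2) ^ 2) := by
      nlinarith [mul_le_mul (show (7/2:ℝ) ≤ 2 + z by linarith) h5 (by norm_num)
        (show (0:ℝ) ≤ 2 + z by linarith)]
    have hu2 : (2 + z) * (z ^ 2 - (2*x - 2) ^ 2) ≤ 16 := by
      nlinarith [mul_le_mul (show (2:ℝ) + z ≤ 4 by linarith) h7 (by linarith) (by norm_num)]
    have hm : 2 * (2 - z) ≤ ((2:ℝ) ^ 2 - z ^ 2) * (z ^ 2 - (2*x - 2) ^ 2) := by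
      nlinarith [mul_le_mul_of_nonneg_left hu (show (0:ℝ) ≤ 2 - z by linarith)]
    have hM : ((2:ℝ) ^ 2 - z ^ 2) * (z ^ 2 - (2*x - 2) ^ 2) ≤ 32 * (2 - z) := by
      nlinarith [mul_le_mul_of_nonneg_left hu2 (show (0:ℝ) ≤ 2 - z by linarith)]
    have hB := aux_rpow_scaled_lb (κ := a + b - 1/2) hX two_pos hm hM
    have hzl : min ((3/2:ℝ) ^ (1 - b)) ((2:ℝ) ^ (1 - b)) ≤ z ^ (1 - b) :=
      aux_rpow_min_le (by norm_num) hz1.le hz2.le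
    have hBnn : (0:ℝ) ≤ (((2:ℝ) ^ 2 - z ^ 2) * (z ^ 2 - (2*x - 2) ^ 2)) ^ (a + b - 1/2) :=
      Real.rpow_nonneg (by nlinarith) _
    have step : (min ((2:ℝ) ^ (a + b - 1/2)) ((32:ℝ) ^ (a + b - 1/2))
        * min ((3/2:ℝ) ^ (1 - b)) ((2:ℝ) ^ (1 - b))) * (2 - z) ^ (a+b-1/2)
        ≤ (((2:ℝ) ^ 2 - z ^ 2) * (z ^ 2 - (2*x - 2) ^ 2)) ^ (a + b - 1/2) * z ^ (1 - b) := by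
      calc (min ((2:ℝ) ^ (a + b - 1/2)) ((32:ℝ) ^ (a + b - 1/2))
          * min ((3/2:ℝ) ^ (1 - b)) ((2:ℝ) ^ (1 - b))) * (2 - z) ^ (a+b-1/2)
          = ((2 - z) ^ (a+b-1/2) * min ((2:ℝ) ^ (a + b - 1/2)) ((32:ℝ) ^ (a + b - 1/2)))
            * min ((3/2:ℝ) ^ (1 - b)) ((2:ℝ) ^ (1 - b)) := by ring
        _ ≤ _ := mul_le_mul hB hzl hc4.le hBnn
    calc (min ((2:ℝ) ^ (a + b - 1/2)) ((32:ℝ) ^ (a + b - 1/2))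
        * min ((3/2:ℝ) ^ (1 - b)) ((2:ℝ) ^ (1 - b))) * ((2 - z) ^ (a+b-1/2) * f z)
        = (min ((2:ℝ) ^ (a + b - 1/2)) ((32:ℝ) ^ (a + b - 1/2))
          * min ((3/2:ℝ) ^ (1 - b)) ((2:ℝ) ^ (1 - b))) * (2 - z) ^ (a+b-1/2) * f z := by ring
      _ ≤ _ := mul_le_mul_of_nonneg_right step (hf z)
  calc ENNReal.ofReal ((min ((1/2:ℝ) ^ (-(2*a) - b)) ((1:ℝ) ^ (-(2*a) - b))
      * min ((1:ℝ) ^ (-(2*a) - 2*b)) ((3/2:ℝ) ^ (-(2*a) - 2*b)))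
      * (min ((2:ℝ) ^ (a + b - 1/2)) ((32:ℝ) ^ (a + b - 1/2))
        * min ((3/2:ℝ) ^ (1 - b)) ((2:ℝ) ^ (1 - b))))
      * ∫⁻ z in Set.Ioo (3/2:ℝ) 2, ENNReal.ofReal ((2 - z) ^ (a+b-1/2) * f z)
      = ENNReal.ofReal (min ((1/2:ℝ) ^ (-(2*a) - b)) ((1:ℝ) ^ (-(2*a) - b))
          * min ((1:ℝ) ^ (-(2*a) - 2*b)) ((3/2:ℝ) ^ (-(2*a) - 2*b)))
        * ∫⁻ z in Set.Ioo (3/2:ℝ) 2,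
            ENNReal.ofReal ((min ((2:ℝ) ^ (a + b - 1/2)) ((32:ℝ) ^ (a + b - 1/2))
              * min ((3/2:ℝ) ^ (1 - b)) ((2:ℝ) ^ (1 - b))) * ((2 - z) ^ (a+b-1/2) * f z)) := by
        rw [ENNReal.ofReal_mul (mul_pos hc1 hc2).le, mul_assoc]
        congr 1
        rw [← lintegral_const_mul' _ _ ENNReal.ofReal_ne_top]
        exact lintegral_congr fun z => (ENNReal.ofReal_mul (mul_pos hc3 hc4).le).symm
    _ ≤ _ := mul_le_mul' (ENNReal.ofReal_le_ofReal hpre) hinner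

lemma aux_U2_core2 (a b : ℝ) : ∃ c : ℝ, 0 < c ∧ ∀ (f : ℝ → ℝ), (∀ z, 0 ≤ f z) →
    ∀ x ∈ Set.Ioo (1/2:ℝ) 1,
    ENNReal.ofReal c * ∫⁻ z in Set.Ioo (3/2:ℝ) 2, ENNReal.ofReal ((2 - z) ^ (a+b-1/2) * f z)
      ≤ U2 a b (2 - x) f x := by
  have hc1 : (0:ℝ) < min ((1/2:ℝ) ^ (-a - 1/2)) ((1:ℝ) ^ (-a - 1/2)) :=
    aux_min_pos (by norm_num) one_pos
  have hc2 : (0:ℝ) < min ((1:ℝ) ^ (-(2*a) - 2*b)) ((3/2:ℝ) ^ (-(2*a) - 2*b)) :=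
    aux_min_pos one_pos (by norm_num)
  have hc3 : (0:ℝ) < min ((1/2:ℝ) ^ (a + b - 1/2)) ((4:ℝ) ^ (a + b - 1/2)) :=
    aux_min_pos (by norm_num) (by norm_num)
  have hc4 : (0:ℝ) < min ((3/2:ℝ) ^ (a + 1/2)) ((2:ℝ) ^ (a + 1/2)) :=
    aux_min_pos (by norm_num) two_pos
  refine ⟨(min ((1/2:ℝ) ^ (-a - 1/2)) ((1:ℝ) ^ (-a - 1/2))
      * min ((1:ℝ) ^ (-(2*a) - 2*b)) ((3/2:ℝ) ^ (-(2*a) - 2*b)))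
      * (min ((1/2:ℝ) ^ (a + b - 1/2)) ((4:ℝ) ^ (a + b - 1/2))
        * min ((3/2:ℝ) ^ (a + 1/2)) ((2:ℝ) ^ (a + 1/2))),
    mul_pos (mul_pos hc1 hc2) (mul_pos hc3 hc4), ?_⟩
  intro f hf x hx
  obtain ⟨hx1, hx2⟩ := hx
  have hx0 : (0:ℝ) < x := by linarith
  rw [U2, show (2:ℝ) - x + x = 2 by ring,
    abs_of_pos (show (0:ℝ) < 2 - x - x by linarith)]
  have hpre : min ((1/2:ℝ) ^ (-a - 1/2)) ((1:ℝ) ^ (-a - 1/2))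
      * min ((1:ℝ) ^ (-(2*a) - 2*b)) ((3/2:ℝ) ^ (-(2*a) - 2*b))
      ≤ x ^ (-a - 1/2) * (2 - x) ^ (-(2*a) - 2*b) :=
    mul_le_mul (aux_rpow_min_le (by norm_num) hx1.le hx2.le)
      (aux_rpow_min_le one_pos (by linarith) (by linarith)) hc2.le
      (Real.rpow_nonneg hx0.le _)
  have hinner : ∫⁻ z in Set.Ioo (3/2:ℝ) 2,
      ENNReal.ofReal ((min ((1/2:ℝ) ^ (a + b - 1/2)) ((4:ℝ) ^ (a + b - 1/2))
        * min ((3/2:ℝ) ^ (a + 1/2)) ((2:ℝ) ^ (a + 1/2))) * ((2 - z) ^ (a+b-1/2) * f z))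
      ≤ ∫⁻ z in Set.Ioo (2 - x - x) 2,
        ENNReal.ofReal (((2 - x) ^ 2 - (x - z) ^ 2) ^ (a + b - 1/2)
          * z ^ (a + 1/2) * f z) := by
    refine aux_lint_lb (fun z hz => ⟨by linarith [hz.1], hz.2⟩) (fun z hz => ?_)
    obtain ⟨hz1, hz2⟩ := hz
    have hX : (0:ℝ) < 2 - z := by linarith
    have hw1 : (1/2:ℝ) < z + 2 - 2*x := by linarith
    have hw2 : z + 2 - 2*x < 4 := by linarith
    have hm : 1/2 * (2 - z) ≤ (2 - x) ^ 2 - (x - z) ^ 2 := by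
      nlinarith [mul_le_mul_of_nonneg_left hw1.le (show (0:ℝ) ≤ 2 - z by linarith)]
    have hM : (2 - x) ^ 2 - (x - z) ^ 2 ≤ 4 * (2 - z) := by
      nlinarith [mul_le_mul_of_nonneg_left hw2.le (show (0:ℝ) ≤ 2 - z by linarith)]
    have hB := aux_rpow_scaled_lb (κ := a + b - 1/2) hX (by norm_num : (0:ℝ) < 1/2) hm hM
    have hzl : min ((3/2:ℝ) ^ (a + 1/2)) ((2:ℝ) ^ (a + 1/2)) ≤ z ^ (a + 1/2) :=
      aux_rpow_min_le (by norm_num) hz1.le hz2.le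
    have hBnn : (0:ℝ) ≤ ((2 - x) ^ 2 - (x - z) ^ 2) ^ (a + b - 1/2) :=
      Real.rpow_nonneg (by nlinarith) _
    have step : (min ((1/2:ℝ) ^ (a + b - 1/2)) ((4:ℝ) ^ (a + b - 1/2))
        * min ((3/2:ℝ) ^ (a + 1/2)) ((2:ℝ) ^ (a + 1/2))) * (2 - z) ^ (a+b-1/2)
        ≤ ((2 - x) ^ 2 - (x - z) ^ 2) ^ (a + b - 1/2) * z ^ (a + 1/2) := by
      calc (min ((1/2:ℝ) ^ (a + b - 1/2)) ((4:ℝ) ^ (a + b - 1/2))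
          * min ((3/2:ℝ) ^ (a + 1/2)) ((2:ℝ) ^ (a + 1/2))) * (2 - z) ^ (a+b-1/2)
          = ((2 - z) ^ (a+b-1/2) * min ((1/2:ℝ) ^ (a + b - 1/2)) ((4:ℝ) ^ (a + b - 1/2)))
            * min ((3/2:ℝ) ^ (a + 1/2)) ((2:ℝ) ^ (a + 1/2)) := by ring
        _ ≤ _ := mul_le_mul hB hzl hc4.le hBnn
    calc (min ((1/2:ℝ) ^ (a + b - 1/2)) ((4:ℝ) ^ (a + b - 1/2))
        * min ((3/2:ℝ) ^ (a + 1/2)) ((2:ℝ) ^ (a + 1/2))) * ((2 - z) ^ (a+b-1/2) * f z)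
        = (min ((1/2:ℝ) ^ (a + b - 1/2)) ((4:ℝ) ^ (a + b - 1/2))
          * min ((3/2:ℝ) ^ (a + 1/2)) ((2:ℝ) ^ (a + 1/2))) * (2 - z) ^ (a+b-1/2) * f z := by
            ring
      _ ≤ _ := mul_le_mul_of_nonneg_right step (hf z)
  calc ENNReal.ofReal ((min ((1/2:ℝ) ^ (-a - 1/2)) ((1:ℝ) ^ (-a - 1/2))
      * min ((1:ℝ) ^ (-(2*a) - 2*b)) ((3/2:ℝ) ^ (-(2*a) - 2*b)))
      * (min ((1/2:ℝ) ^ (a + b - 1/2)) ((4:ℝ) ^ (a + b - 1/2))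
        * min ((3/2:ℝ) ^ (a + 1/2)) ((2:ℝ) ^ (a + 1/2))))
      * ∫⁻ z in Set.Ioo (3/2:ℝ) 2, ENNReal.ofReal ((2 - z) ^ (a+b-1/2) * f z)
      = ENNReal.ofReal (min ((1/2:ℝ) ^ (-a - 1/2)) ((1:ℝ) ^ (-a - 1/2))
          * min ((1:ℝ) ^ (-(2*a) - 2*b)) ((3/2:ℝ) ^ (-(2*a) - 2*b)))
        * ∫⁻ z in Set.Ioo (3/2:ℝ) 2,
            ENNReal.ofReal ((min ((1/2:ℝ) ^ (a + b - 1/2)) ((4:ℝ) ^ (a + b - 1/2))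
              * min ((3/2:ℝ) ^ (a + 1/2)) ((2:ℝ) ^ (a + 1/2)))
              * ((2 - z) ^ (a+b-1/2) * f z)) := by
        rw [ENNReal.ofReal_mul (mul_pos hc1 hc2).le, mul_assoc]
        congr 1
        rw [← lintegral_const_mul' _ _ ENNReal.ofReal_ne_top]
        exact lintegral_congr fun z => (ENNReal.ofReal_mul (mul_pos hc3 hc4).le).symm
    _ ≤ _ := mul_le_mul' (ENNReal.ofReal_le_ofReal hpre) hinner

lemma aux_U1_core3 (a b : ℝ) : ∃ c : ℝ, 0 < c ∧ ∀ h ∈ Set.Ioo (0:ℝ) 1, ∀ x ∈ Set.Ioo (0:ℝ) (h/4),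
    ENNReal.ofReal (c * x ^ b)
      ≤ U1 a b (1 + h/2) ((Set.Ioo (1:ℝ) (1+h)).indicator fun _ => (1:ℝ)) x := by
  have hc1 : (0:ℝ) < min ((1:ℝ) ^ (-(2*a) - 2*b)) ((3/2:ℝ) ^ (-(2*a) - 2*b)) :=
    aux_min_pos one_pos (by norm_num)
  have hc3 : (0:ℝ) < min ((1/2:ℝ) ^ (a + b - 1/2)) ((54:ℝ) ^ (a + b - 1/2)) :=
    aux_min_pos (by norm_num) (by norm_num)
  have hc4 : (0:ℝ) < min ((1:ℝ) ^ (1 - b)) ((2:ℝ) ^ (1 - b)) := aux_min_pos one_pos two_pos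
  refine ⟨min ((1:ℝ) ^ (-(2*a) - 2*b)) ((3/2:ℝ) ^ (-(2*a) - 2*b))
      * (min ((1/2:ℝ) ^ (a + b - 1/2)) ((54:ℝ) ^ (a + b - 1/2))
        * min ((1:ℝ) ^ (1 - b)) ((2:ℝ) ^ (1 - b))),
    mul_pos hc1 (mul_pos hc3 hc4), ?_⟩
  intro h hh x hx
  obtain ⟨hh0, hh1⟩ := hh
  obtain ⟨hx0, hx1⟩ := hx
  rw [U1, abs_of_pos (show (0:ℝ) < 1 + h/2 - x by linarith)]
  set κ := a + b - 1/2 with hκdef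
  set cst := (x^2:ℝ) ^ κ * (min ((1/2:ℝ) ^ κ) ((54:ℝ) ^ κ)
    * min ((1:ℝ) ^ (1 - b)) ((2:ℝ) ^ (1 - b))) with hcst
  have hcstnn : 0 ≤ cst := by
    refine mul_nonneg (Real.rpow_nonneg (by positivity) _) (by positivity)
  have h1 : ∫⁻ _z in Set.Ioo (1 + h/2 - x/2) (1 + h/2 + x/2), ENNReal.ofReal cst
      ≤ ∫⁻ z in Set.Ioo (1 + h/2 - x) (1 + h/2 + x),
        ENNReal.ofReal ((((x + (1 + h/2)) ^ 2 - z ^ 2) * (z ^ 2 - (x - (1 + h/2)) ^ 2)) ^ κ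
          * z ^ (1 - b) * ((Set.Ioo (1:ℝ) (1+h)).indicator (fun _ => (1:ℝ)) z)) := by
    refine aux_lint_lb (fun z hz => ⟨by linarith [hz.1], by linarith [hz.2]⟩)
      (fun z hz => ?_)
    obtain ⟨hz1, hz2⟩ := hz
    have hzmem : z ∈ Set.Ioo (1:ℝ) (1+h) := ⟨by linarith, by linarith⟩
    rw [Set.indicator_of_mem hzmem]
    have f1l : x/2 < x + (1 + h/2) - z := by linarith
    have f1u : x + (1 + h/2) - z < 3*x/2 := by linarith
    have f2l : (2:ℝ) < x + (1 + h/2) + z := by linarith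
    have f2u : x + (1 + h/2) + z < 4 := by linarith
    have f3l : x/2 < z - (1 + h/2) + x := by linarith
    have f3u : z - (1 + h/2) + x < 3*x/2 := by linarith
    have f4l : (3/2:ℝ) < z + (1 + h/2) - x := by linarith
    have f4u : z + (1 + h/2) - x < 4 := by linarith
    have A1l : x/2 * 2 ≤ (x + (1 + h/2) - z) * (x + (1 + h/2) + z) :=
      mul_le_mul f1l.le f2l.le (by norm_num) (by linarith)
    have A1u : (x + (1 + h/2) - z) * (x + (1 + h/2) + z) ≤ 3*x/2 * 4 :=
      mul_le_mul f1u.le f2u.le (by linarith) (by linarith)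
    have A2l : x/2 * (3/2) ≤ (z - (1 + h/2) + x) * (z + (1 + h/2) - x) :=
      mul_le_mul f3l.le f4l.le (by norm_num) (by linarith)
    have A2u : (z - (1 + h/2) + x) * (z + (1 + h/2) - x) ≤ 3*x/2 * 4 :=
      mul_le_mul f3u.le f4u.le (by linarith) (by linarith)
    have hm0 : (x/2 * 2) * (x/2 * (3/2)) ≤ ((x + (1 + h/2) - z) * (x + (1 + h/2) + z))
        * ((z - (1 + h/2) + x) * (z + (1 + h/2) - x)) :=
      mul_le_mul A1l A2l (by positivity) (by linarith)
    have hM0 : ((x + (1 + h/2) - z) * (x + (1 + h/2) + z))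
        * ((z - (1 + h/2) + x) * (z + (1 + h/2) - x)) ≤ (3*x/2 * 4) * (3*x/2 * 4) :=
      mul_le_mul A1u A2u (by nlinarith) (by linarith)
    have hm : 1/2 * x^2 ≤ ((x + (1 + h/2)) ^ 2 - z ^ 2) * (z ^ 2 - (x - (1 + h/2)) ^ 2) := by
      nlinarith [hm0, sq_nonneg x]
    have hM : ((x + (1 + h/2)) ^ 2 - z ^ 2) * (z ^ 2 - (x - (1 + h/2)) ^ 2) ≤ 54 * x^2 := by
      nlinarith [hM0, sq_nonneg x]
    have hB := aux_rpow_scaled_lb (κ := κ) (pow_pos hx0 2) (by norm_num : (0:ℝ) < 1/2) hm hM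
    have hzl : min ((1:ℝ) ^ (1 - b)) ((2:ℝ) ^ (1 - b)) ≤ z ^ (1 - b) :=
      aux_rpow_min_le one_pos (by linarith) (by linarith)
    have hBnn : (0:ℝ) ≤ (((x + (1 + h/2)) ^ 2 - z ^ 2) * (z ^ 2 - (x - (1 + h/2)) ^ 2)) ^ κ :=
      Real.rpow_nonneg (by nlinarith [hm, sq_nonneg x]) _
    calc cst = ((x^2:ℝ) ^ κ * min ((1/2:ℝ) ^ κ) ((54:ℝ) ^ κ))
        * min ((1:ℝ) ^ (1 - b)) ((2:ℝ) ^ (1 - b)) * 1 := by rw [hcst]; ring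
      _ ≤ (((x + (1 + h/2)) ^ 2 - z ^ 2) * (z ^ 2 - (x - (1 + h/2)) ^ 2)) ^ κ
          * z ^ (1 - b) * 1 := by
        rw [mul_one, mul_one]
        exact mul_le_mul hB hzl hc4.le hBnn
  have h2 : ∫⁻ _z in Set.Ioo (1 + h/2 - x/2) (1 + h/2 + x/2), ENNReal.ofReal cst
      = ENNReal.ofReal cst * ENNReal.ofReal x := by
    rw [setLIntegral_const, Real.volume_Ioo, show 1 + h/2 + x/2 - (1 + h/2 - x/2) = x by ring]
  have hct : min ((1:ℝ) ^ (-(2*a) - 2*b)) ((3/2:ℝ) ^ (-(2*a) - 2*b))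
      ≤ (1 + h/2) ^ (-(2*a) - 2*b) :=
    aux_rpow_min_le one_pos (by linarith) (by linarith)
  have hxpow : x ^ (-(2*a) - b) * (x^2:ℝ) ^ κ * x = x ^ b := by
    rw [show ((x:ℝ)^2) = x ^ (2:ℝ) by rw [← Real.rpow_natCast x 2]; norm_num,
      ← Real.rpow_mul hx0.le, ← Real.rpow_add hx0, ← Real.rpow_add_one hx0.ne']
    congr 1; rw [hκdef]; ring
  have hreal : min ((1:ℝ) ^ (-(2*a) - 2*b)) ((3/2:ℝ) ^ (-(2*a) - 2*b))
      * (min ((1/2:ℝ) ^ κ) ((54:ℝ) ^ κ) * min ((1:ℝ) ^ (1 - b)) ((2:ℝ) ^ (1 - b))) * x ^ b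
      ≤ (x ^ (-(2*a) - b) * (1 + h/2) ^ (-(2*a) - 2*b)) * (cst * x) := by
    calc min ((1:ℝ) ^ (-(2*a) - 2*b)) ((3/2:ℝ) ^ (-(2*a) - 2*b))
        * (min ((1/2:ℝ) ^ κ) ((54:ℝ) ^ κ) * min ((1:ℝ) ^ (1 - b)) ((2:ℝ) ^ (1 - b))) * x ^ b
        = (min ((1/2:ℝ) ^ κ) ((54:ℝ) ^ κ) * min ((1:ℝ) ^ (1 - b)) ((2:ℝ) ^ (1 - b)) * x ^ b)
          * min ((1:ℝ) ^ (-(2*a) - 2*b)) ((3/2:ℝ) ^ (-(2*a) - 2*b)) := by ring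
      _ ≤ (min ((1/2:ℝ) ^ κ) ((54:ℝ) ^ κ) * min ((1:ℝ) ^ (1 - b)) ((2:ℝ) ^ (1 - b)) * x ^ b)
          * (1 + h/2) ^ (-(2*a) - 2*b) := by
        refine mul_le_mul_of_nonneg_left hct ?_
        exact mul_nonneg (mul_nonneg (by positivity) (by positivity))
          (Real.rpow_nonneg hx0.le _)
      _ = (x ^ (-(2*a) - b) * (1 + h/2) ^ (-(2*a) - 2*b)) * (cst * x) := by
        rw [hcst, ← hxpow]; ring
  calc ENNReal.ofReal (min ((1:ℝ) ^ (-(2*a) - 2*b)) ((3/2:ℝ) ^ (-(2*a) - 2*b))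
      * (min ((1/2:ℝ) ^ (a + b - 1/2)) ((54:ℝ) ^ (a + b - 1/2))
        * min ((1:ℝ) ^ (1 - b)) ((2:ℝ) ^ (1 - b))) * x ^ b)
      ≤ ENNReal.ofReal ((x ^ (-(2*a) - b) * (1 + h/2) ^ (-(2*a) - 2*b)) * (cst * x)) := by
        exact ENNReal.ofReal_le_ofReal hreal
    _ = ENNReal.ofReal (x ^ (-(2*a) - b) * (1 + h/2) ^ (-(2*a) - 2*b))
        * (ENNReal.ofReal cst * ENNReal.ofReal x) := by
        rw [ENNReal.ofReal_mul (mul_nonneg (Real.rpow_nonneg hx0.le _)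
          (Real.rpow_nonneg (by linarith) _)), ENNReal.ofReal_mul hcstnn]
    _ ≤ _ := by
        refine mul_le_mul' le_rfl ?_
        rw [← h2]
        exact h1

lemma aux_U2_core3 (a b : ℝ) : ∃ c : ℝ, 0 < c ∧ ∀ h ∈ Set.Ioo (0:ℝ) 1, ∀ x ∈ Set.Ioo (0:ℝ) (h/4),
    ENNReal.ofReal (c * x ^ b)
      ≤ U2 a b (1 + h/2) ((Set.Ioo (1:ℝ) (1+h)).indicator fun _ => (1:ℝ)) x := by
  have hc1 : (0:ℝ) < min ((1:ℝ) ^ (-(2*a) - 2*b)) ((3/2:ℝ) ^ (-(2*a) - 2*b)) :=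
    aux_min_pos one_pos (by norm_num)
  have hc3 : (0:ℝ) < min ((3/4:ℝ) ^ (a + b - 1/2)) ((6:ℝ) ^ (a + b - 1/2)) :=
    aux_min_pos (by norm_num) (by norm_num)
  have hc4 : (0:ℝ) < min ((1:ℝ) ^ (a + 1/2)) ((2:ℝ) ^ (a + 1/2)) := aux_min_pos one_pos two_pos
  refine ⟨min ((1:ℝ) ^ (-(2*a) - 2*b)) ((3/2:ℝ) ^ (-(2*a) - 2*b))
      * (min ((3/4:ℝ) ^ (a + b - 1/2)) ((6:ℝ) ^ (a + b - 1/2))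
        * min ((1:ℝ) ^ (a + 1/2)) ((2:ℝ) ^ (a + 1/2))),
    mul_pos hc1 (mul_pos hc3 hc4), ?_⟩
  intro h hh x hx
  obtain ⟨hh0, hh1⟩ := hh
  obtain ⟨hx0, hx1⟩ := hx
  rw [U2, abs_of_pos (show (0:ℝ) < 1 + h/2 - x by linarith)]
  set κ := a + b - 1/2 with hκdef
  set cst := (x:ℝ) ^ κ * (min ((3/4:ℝ) ^ κ) ((6:ℝ) ^ κ)
    * min ((1:ℝ) ^ (a + 1/2)) ((2:ℝ) ^ (a + 1/2))) with hcst
  have hcstnn : 0 ≤ cst :=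
    mul_nonneg (Real.rpow_nonneg hx0.le _) (by positivity)
  have h1 : ∫⁻ _z in Set.Ioo (1 + h/2 - x/2) (1 + h/2 + x/2), ENNReal.ofReal cst
      ≤ ∫⁻ z in Set.Ioo (1 + h/2 - x) (1 + h/2 + x),
        ENNReal.ofReal (((1 + h/2) ^ 2 - (x - z) ^ 2) ^ κ
          * z ^ (a + 1/2) * ((Set.Ioo (1:ℝ) (1+h)).indicator (fun _ => (1:ℝ)) z)) := by
    refine aux_lint_lb (fun z hz => ⟨by linarith [hz.1], by linarith [hz.2]⟩)
      (fun z hz => ?_)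
    obtain ⟨hz1, hz2⟩ := hz
    have hzmem : z ∈ Set.Ioo (1:ℝ) (1+h) := ⟨by linarith, by linarith⟩
    rw [Set.indicator_of_mem hzmem]
    have f1l : x/2 < (1 + h/2) + x - z := by linarith
    have f1u : (1 + h/2) + x - z < 3*x/2 := by linarith
    have f4l : (3/2:ℝ) < (1 + h/2) - x + z := by linarith
    have f4u : (1 + h/2) - x + z < 4 := by linarith
    have A1l : 3/2 * (x/2) ≤ ((1 + h/2) - x + z) * ((1 + h/2) + x - z) :=
      mul_le_mul f4l.le f1l.le (by positivity) (by linarith)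
    have A1u : ((1 + h/2) - x + z) * ((1 + h/2) + x - z) ≤ 4 * (3*x/2) :=
      mul_le_mul f4u.le f1u.le (by linarith) (by norm_num)
    have hm : 3/4 * x ≤ (1 + h/2) ^ 2 - (x - z) ^ 2 := by nlinarith [A1l]
    have hM : (1 + h/2) ^ 2 - (x - z) ^ 2 ≤ 6 * x := by nlinarith [A1u]
    have hB := aux_rpow_scaled_lb (κ := κ) hx0 (by norm_num : (0:ℝ) < 3/4) hm hM
    have hzl : min ((1:ℝ) ^ (a + 1/2)) ((2:ℝ) ^ (a + 1/2)) ≤ z ^ (a + 1/2) :=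
      aux_rpow_min_le one_pos (by linarith) (by linarith)
    have hBnn : (0:ℝ) ≤ ((1 + h/2) ^ 2 - (x - z) ^ 2) ^ κ :=
      Real.rpow_nonneg (by nlinarith [hm]) _
    calc cst = ((x:ℝ) ^ κ * min ((3/4:ℝ) ^ κ) ((6:ℝ) ^ κ))
        * min ((1:ℝ) ^ (a + 1/2)) ((2:ℝ) ^ (a + 1/2)) * 1 := by rw [hcst]; ring
      _ ≤ ((1 + h/2) ^ 2 - (x - z) ^ 2) ^ κ * z ^ (a + 1/2) * 1 := by
        rw [mul_one, mul_one]
        exact mul_le_mul hB hzl hc4.le hBnn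
  have h2 : ∫⁻ _z in Set.Ioo (1 + h/2 - x/2) (1 + h/2 + x/2), ENNReal.ofReal cst
      = ENNReal.ofReal cst * ENNReal.ofReal x := by
    rw [setLIntegral_const, Real.volume_Ioo, show 1 + h/2 + x/2 - (1 + h/2 - x/2) = x by ring]
  have hct : min ((1:ℝ) ^ (-(2*a) - 2*b)) ((3/2:ℝ) ^ (-(2*a) - 2*b))
      ≤ (1 + h/2) ^ (-(2*a) - 2*b) :=
    aux_rpow_min_le one_pos (by linarith) (by linarith)
  have hxpow : x ^ (-a - 1/2) * (x:ℝ) ^ κ * x = x ^ b := by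
    rw [← Real.rpow_add hx0, ← Real.rpow_add_one hx0.ne']
    congr 1; rw [hκdef]; ring
  have hreal : min ((1:ℝ) ^ (-(2*a) - 2*b)) ((3/2:ℝ) ^ (-(2*a) - 2*b))
      * (min ((3/4:ℝ) ^ κ) ((6:ℝ) ^ κ) * min ((1:ℝ) ^ (a + 1/2)) ((2:ℝ) ^ (a + 1/2))) * x ^ b
      ≤ (x ^ (-a - 1/2) * (1 + h/2) ^ (-(2*a) - 2*b)) * (cst * x) := by
    calc min ((1:ℝ) ^ (-(2*a) - 2*b)) ((3/2:ℝ) ^ (-(2*a) - 2*b))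
        * (min ((3/4:ℝ) ^ κ) ((6:ℝ) ^ κ) * min ((1:ℝ) ^ (a + 1/2)) ((2:ℝ) ^ (a + 1/2))) * x ^ b
        = (min ((3/4:ℝ) ^ κ) ((6:ℝ) ^ κ) * min ((1:ℝ) ^ (a + 1/2)) ((2:ℝ) ^ (a + 1/2)) * x ^ b)
          * min ((1:ℝ) ^ (-(2*a) - 2*b)) ((3/2:ℝ) ^ (-(2*a) - 2*b)) := by ring
      _ ≤ (min ((3/4:ℝ) ^ κ) ((6:ℝ) ^ κ) * min ((1:ℝ) ^ (a + 1/2)) ((2:ℝ) ^ (a + 1/2)) * x ^ b)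
          * (1 + h/2) ^ (-(2*a) - 2*b) := by
        refine mul_le_mul_of_nonneg_left hct ?_
        exact mul_nonneg (mul_nonneg (by positivity) (by positivity))
          (Real.rpow_nonneg hx0.le _)
      _ = (x ^ (-a - 1/2) * (1 + h/2) ^ (-(2*a) - 2*b)) * (cst * x) := by
        rw [hcst, ← hxpow]; ring
  calc ENNReal.ofReal (min ((1:ℝ) ^ (-(2*a) - 2*b)) ((3/2:ℝ) ^ (-(2*a) - 2*b))
      * (min ((3/4:ℝ) ^ (a + b - 1/2)) ((6:ℝ) ^ (a + b - 1/2))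
        * min ((1:ℝ) ^ (a + 1/2)) ((2:ℝ) ^ (a + 1/2))) * x ^ b)
      ≤ ENNReal.ofReal ((x ^ (-a - 1/2) * (1 + h/2) ^ (-(2*a) - 2*b)) * (cst * x)) :=
        ENNReal.ofReal_le_ofReal hreal
    _ = ENNReal.ofReal (x ^ (-a - 1/2) * (1 + h/2) ^ (-(2*a) - 2*b))
        * (ENNReal.ofReal cst * ENNReal.ofReal x) := by
        rw [ENNReal.ofReal_mul (mul_nonneg (Real.rpow_nonneg hx0.le _)
          (Real.rpow_nonneg (by linarith) _)), ENNReal.ofReal_mul hcstnn]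
    _ ≤ _ := by
        refine mul_le_mul' le_rfl ?_
        rw [← h2]
        exact h1

/-- necessary conditions for the U-type maximal operators. -/
theorem necessary_conditions_U (a b p δ : ℝ) (ha : -1 < a) (hab : -(1/2) < a + b)
    (hp : 1 < p) (S : (ℝ → ℝ) → ℝ → ℝ≥0∞)
    (hS : S = Ustar1 a b ∨ S = Ustar2 a b ∨ S = Ustar2t a b)
    (hwd : ∀ f : ℝ → ℝ, Measurable f → (∀ z, 0 ≤ f z) → wNormR p δ f < ⊤ →
      ∀ᵐ x ∂(volume.restrict (Set.Ioi (0 : ℝ))), S f x < ⊤)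
    (hbd : ∃ C : ℝ≥0, ∀ f : ℝ → ℝ, Measurable f → (∀ z, 0 ≤ f z) →
      wNorm p δ (S f) ≤ C * wNormR p δ f) :
    δ < (2*a + b + 1) * p - 1 ∧ 1/p < a + b + 1/2 ∧ -b * p ≤ δ := by
  obtain ⟨C, hC⟩ := hbd
  have hp0 : (0:ℝ) < p := by linarith
  have key1 : ∃ c : ℝ, 0 < c ∧ ∀ f : ℝ → ℝ, (∀ z, 0 ≤ f z) → ∀ x ∈ Set.Ioo (1:ℝ) 2,
      ENNReal.ofReal c * ∫⁻ z in Set.Ioo (0:ℝ) 1, ENNReal.ofReal (z ^ (2*a+b) * f z)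
        ≤ S f x := by
    rcases hS with h | h | h
    · obtain ⟨c, hc, hcore⟩ := aux_U1_core1 a b
      refine ⟨c, hc, fun f hf x hx => le_trans (hcore f hf x hx) ?_⟩
      rw [h, Ustar1]
      exact le_biSup (fun t => U1 a b t f x) (show x ∈ Set.Ioi (0:ℝ) from by
        simp only [Set.mem_Ioi]; linarith [hx.1])
    · obtain ⟨c, hc, hcore⟩ := aux_U2_core1 a b
      refine ⟨c, hc, fun f hf x hx => le_trans (hcore f hf x hx) ?_⟩
      rw [h, Ustar2]
      exact le_biSup (fun t => U2 a b t f x) (show x ∈ Set.Ioi (0:ℝ) from by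
        simp only [Set.mem_Ioi]; linarith [hx.1])
    · obtain ⟨c, hc, hcore⟩ := aux_U2_core1 a b
      refine ⟨Real.log 2 * c, mul_pos (Real.log_pos one_lt_two) hc, fun f hf x hx => ?_⟩
      have hx0 : (0:ℝ) < x := by linarith [hx.1]
      calc ENNReal.ofReal (Real.log 2 * c)
            * ∫⁻ z in Set.Ioo (0:ℝ) 1, ENNReal.ofReal (z ^ (2*a+b) * f z)
          = ENNReal.ofReal (Real.log 2)
            * (ENNReal.ofReal c * ∫⁻ z in Set.Ioo (0:ℝ) 1, ENNReal.ofReal (z ^ (2*a+b) * f z)) := by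
            rw [ENNReal.ofReal_mul (Real.log_nonneg one_le_two), mul_assoc]
        _ ≤ ENNReal.ofReal (Real.log 2) * U2 a b x f x := mul_le_mul' le_rfl (hcore f hf x hx)
        _ ≤ U2t a b x f x := aux_U2t_ge a b hx0 hx0 hf
        _ ≤ S f x := by
            rw [h, Ustar2t]
            exact le_biSup (fun t => U2t a b t f x) (show x ∈ Set.Ioi (0:ℝ) from hx0)
  have key2 : ∃ c : ℝ, 0 < c ∧ ∀ f : ℝ → ℝ, (∀ z, 0 ≤ f z) → ∀ x ∈ Set.Ioo (1/2:ℝ) 1,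
      ENNReal.ofReal c * ∫⁻ z in Set.Ioo (3/2:ℝ) 2, ENNReal.ofReal ((2 - z) ^ (a+b-1/2) * f z)
        ≤ S f x := by
    rcases hS with h | h | h
    · obtain ⟨c, hc, hcore⟩ := aux_U1_core2 a b
      refine ⟨c, hc, fun f hf x hx => le_trans (hcore f hf x hx) ?_⟩
      rw [h, Ustar1]
      exact le_biSup (fun t => U1 a b t f x) (show (2 - x) ∈ Set.Ioi (0:ℝ) from by
        simp only [Set.mem_Ioi]; linarith [hx.2])
    · obtain ⟨c, hc, hcore⟩ := aux_U2_core2 a b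
      refine ⟨c, hc, fun f hf x hx => le_trans (hcore f hf x hx) ?_⟩
      rw [h, Ustar2]
      exact le_biSup (fun t => U2 a b t f x) (show (2 - x) ∈ Set.Ioi (0:ℝ) from by
        simp only [Set.mem_Ioi]; linarith [hx.2])
    · obtain ⟨c, hc, hcore⟩ := aux_U2_core2 a b
      refine ⟨Real.log 2 * c, mul_pos (Real.log_pos one_lt_two) hc, fun f hf x hx => ?_⟩
      have hx0 : (0:ℝ) < x := by linarith [hx.1]
      have ht0 : (0:ℝ) < 2 - x := by linarith [hx.2]
      calc ENNReal.ofReal (Real.log 2 * c)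
            * ∫⁻ z in Set.Ioo (3/2:ℝ) 2, ENNReal.ofReal ((2 - z) ^ (a+b-1/2) * f z)
          = ENNReal.ofReal (Real.log 2)
            * (ENNReal.ofReal c
              * ∫⁻ z in Set.Ioo (3/2:ℝ) 2, ENNReal.ofReal ((2 - z) ^ (a+b-1/2) * f z)) := by
            rw [ENNReal.ofReal_mul (Real.log_nonneg one_le_two), mul_assoc]
        _ ≤ ENNReal.ofReal (Real.log 2) * U2 a b (2 - x) f x :=
            mul_le_mul' le_rfl (hcore f hf x hx)
        _ ≤ U2t a b (2 - x) f x := aux_U2t_ge a b hx0 ht0 hf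
        _ ≤ S f x := by
            rw [h, Ustar2t]
            exact le_biSup (fun t => U2t a b t f x) (show (2 - x) ∈ Set.Ioi (0:ℝ) from ht0)
  have key3 : ∃ c : ℝ, 0 < c ∧ ∀ h ∈ Set.Ioo (0:ℝ) 1, ∀ x ∈ Set.Ioo (0:ℝ) (h/4),
      ENNReal.ofReal (c * x ^ b)
        ≤ S ((Set.Ioo (1:ℝ) (1+h)).indicator fun _ => (1:ℝ)) x := by
    rcases hS with h | h | h
    · obtain ⟨c, hc, hcore⟩ := aux_U1_core3 a b
      refine ⟨c, hc, fun u hu x hx => le_trans (hcore u hu x hx) ?_⟩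
      rw [h, Ustar1]
      exact le_biSup (fun t => U1 a b t ((Set.Ioo (1:ℝ) (1+u)).indicator fun _ => (1:ℝ)) x) (show (1 + u/2) ∈ Set.Ioi (0:ℝ) from by
        simp only [Set.mem_Ioi]; linarith [hu.1])
    · obtain ⟨c, hc, hcore⟩ := aux_U2_core3 a b
      refine ⟨c, hc, fun u hu x hx => le_trans (hcore u hu x hx) ?_⟩
      rw [h, Ustar2]
      exact le_biSup (fun t => U2 a b t ((Set.Ioo (1:ℝ) (1+u)).indicator fun _ => (1:ℝ)) x) (show (1 + u/2) ∈ Set.Ioi (0:ℝ) from by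
        simp only [Set.mem_Ioi]; linarith [hu.1])
    · obtain ⟨c, hc, hcore⟩ := aux_U2_core3 a b
      refine ⟨Real.log 2 * c, mul_pos (Real.log_pos one_lt_two) hc, fun u hu x hx => ?_⟩
      have hx0 : (0:ℝ) < x := hx.1
      have ht0 : (0:ℝ) < 1 + u/2 := by linarith [hu.1]
      have hind : ∀ z, 0 ≤ (Set.Ioo (1:ℝ) (1+u)).indicator (fun _ => (1:ℝ)) z :=
        Set.indicator_nonneg (fun _ _ => zero_le_one)
      calc ENNReal.ofReal (Real.log 2 * c * x ^ b)
          = ENNReal.ofReal (Real.log 2) * ENNReal.ofReal (c * x ^ b) := by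
            rw [← ENNReal.ofReal_mul (Real.log_nonneg one_le_two), mul_assoc]
        _ ≤ ENNReal.ofReal (Real.log 2)
            * U2 a b (1 + u/2) ((Set.Ioo (1:ℝ) (1+u)).indicator fun _ => (1:ℝ)) x :=
            mul_le_mul' le_rfl (hcore u hu x hx)
        _ ≤ U2t a b (1 + u/2) ((Set.Ioo (1:ℝ) (1+u)).indicator fun _ => (1:ℝ)) x :=
            aux_U2t_ge a b hx0 ht0 hind
        _ ≤ S ((Set.Ioo (1:ℝ) (1+u)).indicator fun _ => (1:ℝ)) x := by
            rw [h, Ustar2t]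
            exact le_biSup (fun t => U2t a b t ((Set.Ioo (1:ℝ) (1+u)).indicator fun _ => (1:ℝ)) x) (show (1 + u/2) ∈ Set.Ioi (0:ℝ) from ht0)
  refine ⟨?_, ?_, ?_⟩
  · -- δ < (2a+b+1)p - 1
    by_contra hcon
    push_neg at hcon
    obtain ⟨c, hc, hkey⟩ := key1
    have hWpos : (0:ℝ) < min ((1:ℝ) ^ δ) ((2:ℝ) ^ δ) := aux_min_pos one_pos two_pos
    have hW1pos : (0:ℝ) < min ((1:ℝ) ^ δ) ((2:ℝ) ^ δ) * (2 - 1) := by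
      rw [show (2:ℝ) - 1 = 1 by norm_num, mul_one]; exact hWpos
    refine aux_eps_step (p := p) (C := (C:ℝ)) (c := c)
      (W := (min ((1:ℝ) ^ δ) ((2:ℝ) ^ δ) * (2 - 1)) ^ (1/p)) (R := 1/p) hp hc
      (Real.rpow_pos_of_pos hW1pos _) (by positivity) (fun ε hε hε1 => ?_)
    set fε : ℝ → ℝ := fun z => if z ∈ Set.Ioo (0:ℝ) 1 then z ^ (ε - (δ+1)/p) else 0 with hfε
    have hmeas : Measurable fε := by
      refine Measurable.ite measurableSet_Ioo ?_ measurable_const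
      fun_prop
    have hfnn : ∀ z, 0 ≤ fε z := by
      intro z; rw [hfε]; dsimp only; split_ifs with hz
      · exact Real.rpow_nonneg hz.1.le _
      · exact le_refl 0
    have hI : ENNReal.ofReal ε⁻¹
        ≤ ∫⁻ z in Set.Ioo (0:ℝ) 1, ENNReal.ofReal (z ^ (2*a+b) * fε z) := by
      have hlr := aux_lint_rpow (show (-1:ℝ) < ε - 1 by linarith) one_pos
      rw [show ε - 1 + 1 = ε by ring, Real.one_rpow] at hlr
      calc ENNReal.ofReal ε⁻¹ = ∫⁻ z in Set.Ioo (0:ℝ) 1, ENNReal.ofReal (z ^ (ε - 1)) := by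
            rw [hlr, one_div]
        _ ≤ _ := by
            refine lintegral_mono_ae ?_
            rw [ae_restrict_iff' measurableSet_Ioo]
            refine ae_of_all _ fun z hz => ENNReal.ofReal_le_ofReal ?_
            rw [hfε]; dsimp only; rw [if_pos hz, ← Real.rpow_add hz.1]
            refine Real.rpow_le_rpow_of_exponent_ge hz.1 hz.2.le ?_
            have hq2 : 2*a+b+1 ≤ (δ+1)/p := (le_div_iff₀ hp0).mpr (by nlinarith)
            linarith
    have hSx : ∀ x ∈ Set.Ioo (1:ℝ) 2, ENNReal.ofReal (c * ε⁻¹) ≤ S fε x := by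
      intro x hx
      calc ENNReal.ofReal (c * ε⁻¹) = ENNReal.ofReal c * ENNReal.ofReal ε⁻¹ :=
            ENNReal.ofReal_mul hc.le
        _ ≤ ENNReal.ofReal c * ∫⁻ z in Set.Ioo (0:ℝ) 1, ENNReal.ofReal (z ^ (2*a+b) * fε z) :=
            mul_le_mul' le_rfl hI
        _ ≤ S fε x := hkey fε hfnn x hx
    have hLHS := aux_wNorm_lb (δ := δ) hp0 (by norm_num : (0:ℝ) ≤ 1) (by norm_num : (1:ℝ) < 2)
      (by positivity) hWpos.le hSx (fun x hx => aux_rpow_min_le one_pos hx.1.le hx.2.le)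
    have hRHS : wNormR p δ fε ≤ ENNReal.ofReal ((1/(ε*p)) ^ (1/p)) := by
      have h1 : wNormR p δ fε
          ≤ (∫⁻ z in Set.Ioo (0:ℝ) 1, ENNReal.ofReal (z ^ (ε*p - 1))) ^ (1/p) := by
        refine aux_wNormR_ub hp0 le_rfl (fun x hx => ?_)
        by_cases hxm : x ∈ Set.Ioo (0:ℝ) 1
        · rw [Set.indicator_of_mem hxm]
          rw [hfε]; dsimp only; rw [if_pos hxm,
            abs_of_nonneg (Real.rpow_nonneg hxm.1.le _),
            ENNReal.ofReal_rpow_of_nonneg (Real.rpow_nonneg hxm.1.le _) hp0.le,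
            ← ENNReal.ofReal_mul (Real.rpow_nonneg (Real.rpow_nonneg hxm.1.le _) _)]
          refine ENNReal.ofReal_le_ofReal (le_of_eq ?_)
          rw [← Real.rpow_mul hxm.1.le, ← Real.rpow_add hxm.1]
          congr 1
          field_simp
          ring
        · rw [Set.indicator_of_notMem hxm]
          rw [hfε]; dsimp only; rw [if_neg hxm]
          simp [ENNReal.zero_rpow_of_pos hp0]
      have h2 := aux_lint_rpow (show (-1:ℝ) < ε*p - 1 by nlinarith) one_pos
      rw [show ε*p - 1 + 1 = ε*p by ring, Real.one_rpow] at h2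
      calc wNormR p δ fε ≤ _ := h1
        _ = (ENNReal.ofReal (1/(ε*p))) ^ (1/p) := by rw [h2]
        _ = ENNReal.ofReal ((1/(ε*p)) ^ (1/p)) := ENNReal.ofReal_rpow_of_pos (by positivity)
    have hcomb : ENNReal.ofReal (c * ε⁻¹ * ((min ((1:ℝ) ^ δ) ((2:ℝ) ^ δ) * (2 - 1)) ^ (1/p)))
        ≤ (C : ℝ≥0∞) * ENNReal.ofReal ((1/(ε*p)) ^ (1/p)) :=
      calc _ ≤ wNorm p δ (S fε) := hLHS
        _ ≤ C * wNormR p δ fε := hC fε hmeas hfnn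
        _ ≤ _ := mul_le_mul' le_rfl hRHS
    have hre := aux_extract (by positivity) hcomb
    rw [show (1/p)/ε = 1/(ε*p) by rw [div_div, mul_comm]]
    exact hre
  · -- 1/p < a + b + 1/2
    by_contra hcon
    push_neg at hcon
    obtain ⟨c, hc, hkey⟩ := key2
    have hWpos : (0:ℝ) < min ((1/2:ℝ) ^ δ) ((1:ℝ) ^ δ) := aux_min_pos (by norm_num) one_pos
    have hWmax : (0:ℝ) < max ((3/2:ℝ) ^ δ) ((2:ℝ) ^ δ) :=
      lt_max_of_lt_left (Real.rpow_pos_of_pos (by norm_num) _)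
    have hW1pos : (0:ℝ) < min ((1/2:ℝ) ^ δ) ((1:ℝ) ^ δ) * (1 - 1/2) := by
      nlinarith [hWpos]
    refine aux_eps_step (p := p) (C := (C:ℝ)) (c := c * 2⁻¹)
      (W := (min ((1/2:ℝ) ^ δ) ((1:ℝ) ^ δ) * (1 - 1/2)) ^ (1/p))
      (R := max ((3/2:ℝ) ^ δ) ((2:ℝ) ^ δ) / p) hp (by positivity)
      (Real.rpow_pos_of_pos hW1pos _) (by positivity) (fun ε hε hε1 => ?_)
    set fε : ℝ → ℝ := fun z => if z ∈ Set.Ioo (3/2:ℝ) 2 then (2 - z) ^ (ε - 1/p) else 0 with hfε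
    have hmeas : Measurable fε := by
      refine Measurable.ite measurableSet_Ioo ?_ measurable_const
      fun_prop
    have hfnn : ∀ z, 0 ≤ fε z := by
      intro z; rw [hfε]; dsimp only; split_ifs with hz
      · exact Real.rpow_nonneg (by linarith [hz.2]) _
      · exact le_refl 0
    have hI : ENNReal.ofReal (2⁻¹ * ε⁻¹)
        ≤ ∫⁻ z in Set.Ioo (3/2:ℝ) 2, ENNReal.ofReal ((2 - z) ^ (a+b-1/2) * fε z) := by
      have hlr := aux_lint_two_sub (show (-1:ℝ) < ε - 1 by linarith)
      rw [show ε - 1 + 1 = ε by ring] at hlr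
      have hhalf : (2:ℝ)⁻¹ * ε⁻¹ ≤ (1/2:ℝ) ^ ε / ε := by
        have h12 : (1/2:ℝ) ≤ (1/2:ℝ) ^ ε := by
          have := Real.rpow_le_rpow_of_exponent_ge (show (0:ℝ) < 1/2 by norm_num)
            (by norm_num) hε1.le
          rwa [Real.rpow_one] at this
        rw [show (2:ℝ)⁻¹ * ε⁻¹ = (1/2) / ε by rw [one_div, div_eq_mul_inv]]
        exact (div_le_div_iff_of_pos_right hε).mpr h12
      calc ENNReal.ofReal (2⁻¹ * ε⁻¹) ≤ ENNReal.ofReal ((1/2:ℝ) ^ ε / ε) :=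
            ENNReal.ofReal_le_ofReal hhalf
        _ = ∫⁻ z in Set.Ioo (3/2:ℝ) 2, ENNReal.ofReal ((2 - z) ^ (ε - 1)) := hlr.symm
        _ ≤ _ := by
            refine lintegral_mono_ae ?_
            rw [ae_restrict_iff' measurableSet_Ioo]
            refine ae_of_all _ fun z hz => ENNReal.ofReal_le_ofReal ?_
            have hz2 : (0:ℝ) < 2 - z := by linarith [hz.2]
            rw [hfε]; dsimp only; rw [if_pos hz, ← Real.rpow_add hz2]
            refine Real.rpow_le_rpow_of_exponent_ge hz2 (by linarith [hz.1]) ?_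
            linarith
    have hSx : ∀ x ∈ Set.Ioo (1/2:ℝ) 1, ENNReal.ofReal (c * 2⁻¹ * ε⁻¹) ≤ S fε x := by
      intro x hx
      calc ENNReal.ofReal (c * 2⁻¹ * ε⁻¹)
          = ENNReal.ofReal c * ENNReal.ofReal (2⁻¹ * ε⁻¹) := by
            rw [← ENNReal.ofReal_mul hc.le, mul_assoc]
        _ ≤ ENNReal.ofReal c
            * ∫⁻ z in Set.Ioo (3/2:ℝ) 2, ENNReal.ofReal ((2 - z) ^ (a+b-1/2) * fε z) :=
            mul_le_mul' le_rfl hI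
        _ ≤ S fε x := hkey fε hfnn x hx
    have hLHS := aux_wNorm_lb (δ := δ) hp0 (by norm_num : (0:ℝ) ≤ 1/2)
      (by norm_num : (1/2:ℝ) < 1) (by positivity) hWpos.le hSx
      (fun x hx => aux_rpow_min_le (by norm_num) hx.1.le hx.2.le)
    have hRHS : wNormR p δ fε
        ≤ ENNReal.ofReal ((max ((3/2:ℝ) ^ δ) ((2:ℝ) ^ δ) / (ε*p)) ^ (1/p)) := by
      have h1 : wNormR p δ fε
          ≤ (∫⁻ z in Set.Ioo (3/2:ℝ) 2,
              ENNReal.ofReal (max ((3/2:ℝ) ^ δ) ((2:ℝ) ^ δ) * (2 - z) ^ (ε*p - 1))) ^ (1/p) := by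
        refine aux_wNormR_ub hp0 (by norm_num) (fun x hx => ?_)
        by_cases hxm : x ∈ Set.Ioo (3/2:ℝ) 2
        · rw [Set.indicator_of_mem hxm]
          have hx2 : (0:ℝ) < 2 - x := by linarith [hxm.2]
          rw [hfε]; dsimp only; rw [if_pos hxm,
            abs_of_nonneg (Real.rpow_nonneg hx2.le _),
            ENNReal.ofReal_rpow_of_nonneg (Real.rpow_nonneg hx2.le _) hp0.le,
            ← ENNReal.ofReal_mul (Real.rpow_nonneg (Real.rpow_nonneg hx2.le _) _)]
          refine ENNReal.ofReal_le_ofReal ?_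
          rw [← Real.rpow_mul hx2.le, show (ε - 1/p)*p = ε*p - 1 by field_simp]
          calc (2 - x) ^ (ε*p - 1) * x ^ δ = x ^ δ * (2 - x) ^ (ε*p - 1) := mul_comm _ _
            _ ≤ max ((3/2:ℝ) ^ δ) ((2:ℝ) ^ δ) * (2 - x) ^ (ε*p - 1) :=
              mul_le_mul_of_nonneg_right
                (aux_rpow_le_max (by norm_num) hxm.1.le hxm.2.le)
                (Real.rpow_nonneg hx2.le _)
        · rw [Set.indicator_of_notMem hxm]
          rw [hfε]; dsimp only; rw [if_neg hxm]
          simp [ENNReal.zero_rpow_of_pos hp0]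
      have h2 : ∫⁻ z in Set.Ioo (3/2:ℝ) 2,
          ENNReal.ofReal (max ((3/2:ℝ) ^ δ) ((2:ℝ) ^ δ) * (2 - z) ^ (ε*p - 1))
          ≤ ENNReal.ofReal (max ((3/2:ℝ) ^ δ) ((2:ℝ) ^ δ) / (ε*p)) := by
        have h3 := aux_lint_two_sub (show (-1:ℝ) < ε*p - 1 by nlinarith)
        rw [show ε*p - 1 + 1 = ε*p by ring] at h3
        calc ∫⁻ z in Set.Ioo (3/2:ℝ) 2,
            ENNReal.ofReal (max ((3/2:ℝ) ^ δ) ((2:ℝ) ^ δ) * (2 - z) ^ (ε*p - 1))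
            = ENNReal.ofReal (max ((3/2:ℝ) ^ δ) ((2:ℝ) ^ δ))
              * ∫⁻ z in Set.Ioo (3/2:ℝ) 2, ENNReal.ofReal ((2 - z) ^ (ε*p - 1)) := by
              simp_rw [ENNReal.ofReal_mul hWmax.le]
              rw [lintegral_const_mul' _ _ ENNReal.ofReal_ne_top]
          _ = ENNReal.ofReal (max ((3/2:ℝ) ^ δ) ((2:ℝ) ^ δ))
              * ENNReal.ofReal ((1/2:ℝ) ^ (ε*p) / (ε*p)) := by rw [h3]
          _ ≤ _ := by
              rw [← ENNReal.ofReal_mul hWmax.le]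
              refine ENNReal.ofReal_le_ofReal ?_
              rw [div_eq_mul_inv (max _ _)]
              refine mul_le_mul_of_nonneg_left ?_ hWmax.le
              rw [← one_div]
              refine (div_le_div_iff_of_pos_right (by positivity)).mpr ?_
              exact Real.rpow_le_one (by norm_num) (by norm_num) (by positivity)
      calc wNormR p δ fε ≤ _ := h1
        _ ≤ (ENNReal.ofReal (max ((3/2:ℝ) ^ δ) ((2:ℝ) ^ δ) / (ε*p))) ^ (1/p) :=
            ENNReal.rpow_le_rpow h2 (by positivity)
        _ = _ := ENNReal.ofReal_rpow_of_pos (by positivity)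
    have hcomb : ENNReal.ofReal (c * 2⁻¹ * ε⁻¹
          * ((min ((1/2:ℝ) ^ δ) ((1:ℝ) ^ δ) * (1 - 1/2)) ^ (1/p)))
        ≤ (C : ℝ≥0∞) * ENNReal.ofReal ((max ((3/2:ℝ) ^ δ) ((2:ℝ) ^ δ) / (ε*p)) ^ (1/p)) :=
      calc _ ≤ wNorm p δ (S fε) := hLHS
        _ ≤ C * wNormR p δ fε := hC fε hmeas hfnn
        _ ≤ _ := mul_le_mul' le_rfl hRHS
    have hre := aux_extract (by positivity) hcomb
    rw [show (max ((3/2:ℝ) ^ δ) ((2:ℝ) ^ δ) / p)/ε = max ((3/2:ℝ) ^ δ) ((2:ℝ) ^ δ) / (ε*p) by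
      rw [div_div, mul_comm]]
    exact hre
  · -- -b*p ≤ δ
    by_contra hcon
    push_neg at hcon
    obtain ⟨c, hc, hkey⟩ := key3
    have hmb : (0:ℝ) < min ((1/8:ℝ) ^ b) ((1/4:ℝ) ^ b) := aux_min_pos (by norm_num) (by norm_num)
    have hmδ : (0:ℝ) < min ((1/8:ℝ) ^ δ) ((1/4:ℝ) ^ δ) := aux_min_pos (by norm_num) (by norm_num)
    have hMx : (0:ℝ) < max ((1:ℝ) ^ δ) ((2:ℝ) ^ δ) :=
      lt_max_of_lt_left (Real.rpow_pos_of_pos one_pos _)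
    have hqr : b + (δ+1)*(1/p) < 1/p := by
      have hpp : p * (1/p) = 1 := mul_one_div_cancel hp0.ne'
      have h5 : (b*p + δ) * (1/p) < 0 :=
        mul_neg_of_neg_of_pos (by linarith) (by positivity)
      have e : (b*p + δ) * (1/p) = b * (p * (1/p)) + δ * (1/p) := by ring
      rw [hpp, mul_one] at e
      nlinarith [h5, e]
    refine aux_pow_step (C := (C:ℝ))
      (c := c * min ((1/8:ℝ) ^ b) ((1/4:ℝ) ^ b)
        * (min ((1/8:ℝ) ^ δ) ((1/4:ℝ) ^ δ) * (1/8)) ^ (1/p))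
      (M := max ((1:ℝ) ^ δ) ((2:ℝ) ^ δ)) (q := b + (δ+1)*(1/p)) (r := 1/p)
      (by positivity) hMx hqr (fun h hh0 hh1 => ?_)
    set fh : ℝ → ℝ := (Set.Ioo (1:ℝ) (1+h)).indicator (fun _ => (1:ℝ)) with hfh
    have hmeas : Measurable fh := measurable_const.indicator measurableSet_Ioo
    have hfnn : ∀ z, 0 ≤ fh z := Set.indicator_nonneg (fun _ _ => zero_le_one)
    have hSx : ∀ x ∈ Set.Ioo (h/8) (h/4),
        ENNReal.ofReal (c * (h ^ b * min ((1/8:ℝ) ^ b) ((1/4:ℝ) ^ b))) ≤ S fh x := by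
      intro x hx
      have hx' : x ∈ Set.Ioo (0:ℝ) (h/4) := ⟨by linarith [hx.1], hx.2⟩
      refine le_trans (ENNReal.ofReal_le_ofReal ?_) (hkey h ⟨hh0, hh1⟩ x hx')
      have hxb := aux_rpow_min_le (κ := b) (show (0:ℝ) < h/8 by linarith) hx.1.le hx.2.le
      rw [show (h/8:ℝ) = 1/8*h by ring, show (h/4:ℝ) = 1/4*h by ring,
        Real.mul_rpow (by norm_num) hh0.le, Real.mul_rpow (by norm_num) hh0.le] at hxb
      have heq : h ^ b * min ((1/8:ℝ) ^ b) ((1/4:ℝ) ^ b)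
          = min ((1/8:ℝ) ^ b * h ^ b) ((1/4:ℝ) ^ b * h ^ b) := by
        rw [mul_comm, min_mul_of_nonneg _ _ (Real.rpow_nonneg hh0.le b)]
      rw [heq]
      exact mul_le_mul_of_nonneg_left hxb hc.le
    have hw : ∀ x ∈ Set.Ioo (h/8) (h/4), h ^ δ * min ((1/8:ℝ) ^ δ) ((1/4:ℝ) ^ δ) ≤ x ^ δ := by
      intro x hx
      have hxδ := aux_rpow_min_le (κ := δ) (show (0:ℝ) < h/8 by linarith) hx.1.le hx.2.le
      rw [show (h/8:ℝ) = 1/8*h by ring, show (h/4:ℝ) = 1/4*h by ring,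
        Real.mul_rpow (by norm_num) hh0.le, Real.mul_rpow (by norm_num) hh0.le] at hxδ
      have heq : h ^ δ * min ((1/8:ℝ) ^ δ) ((1/4:ℝ) ^ δ)
          = min ((1/8:ℝ) ^ δ * h ^ δ) ((1/4:ℝ) ^ δ * h ^ δ) := by
        rw [mul_comm, min_mul_of_nonneg _ _ (Real.rpow_nonneg hh0.le δ)]
      rw [heq]
      exact hxδ
    have hLHS := aux_wNorm_lb (δ := δ) hp0 (show (0:ℝ) ≤ h/8 by linarith)
      (show h/8 < h/4 by linarith)
      (by positivity) (by positivity) hSx hw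
    have hRHS : wNormR p δ fh
        ≤ ENNReal.ofReal ((max ((1:ℝ) ^ δ) ((2:ℝ) ^ δ) * h) ^ (1/p)) := by
      have h1 : wNormR p δ fh
          ≤ (∫⁻ _z in Set.Ioo (1:ℝ) (1+h),
              ENNReal.ofReal (max ((1:ℝ) ^ δ) ((2:ℝ) ^ δ))) ^ (1/p) := by
        refine aux_wNormR_ub hp0 (by norm_num) (fun x hx => ?_)
        by_cases hxm : x ∈ Set.Ioo (1:ℝ) (1+h)
        · rw [Set.indicator_of_mem hxm]
          rw [hfh, Set.indicator_of_mem hxm]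
          rw [abs_one, ENNReal.ofReal_one, ENNReal.one_rpow, one_mul]
          exact ENNReal.ofReal_le_ofReal
            (aux_rpow_le_max one_pos hxm.1.le (by linarith [hxm.2]))
        · rw [Set.indicator_of_notMem hxm]
          rw [hfh, Set.indicator_of_notMem hxm]
          simp [ENNReal.zero_rpow_of_pos hp0]
      calc wNormR p δ fh ≤ _ := h1
        _ = (ENNReal.ofReal (max ((1:ℝ) ^ δ) ((2:ℝ) ^ δ) * h)) ^ (1/p) := by
            rw [setLIntegral_const, Real.volume_Ioo, show (1:ℝ) + h - 1 = h by ring,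
              ← ENNReal.ofReal_mul hMx.le]
        _ = _ := ENNReal.ofReal_rpow_of_pos (by positivity)
    have hcomb : ENNReal.ofReal (c * (h ^ b * min ((1/8:ℝ) ^ b) ((1/4:ℝ) ^ b))
          * ((h ^ δ * min ((1/8:ℝ) ^ δ) ((1/4:ℝ) ^ δ)) * (h/4 - h/8)) ^ (1/p))
        ≤ (C : ℝ≥0∞) * ENNReal.ofReal ((max ((1:ℝ) ^ δ) ((2:ℝ) ^ δ) * h) ^ (1/p)) :=
      calc _ ≤ wNorm p δ (S fh) := hLHS
        _ ≤ C * wNormR p δ fh := hC fh hmeas hfnn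
        _ ≤ _ := mul_le_mul' le_rfl hRHS
    have hre := aux_extract (by positivity) hcomb
    have e1 : (h ^ δ * min ((1/8:ℝ) ^ δ) ((1/4:ℝ) ^ δ)) * (h/4 - h/8)
        = h ^ (δ+1) * (min ((1/8:ℝ) ^ δ) ((1/4:ℝ) ^ δ) * (1/8)) := by
      rw [Real.rpow_add_one hh0.ne']; ring
    have e2 : (h ^ (δ+1) * (min ((1/8:ℝ) ^ δ) ((1/4:ℝ) ^ δ) * (1/8))) ^ (1/p)
        = h ^ ((δ+1)*(1/p)) * (min ((1/8:ℝ) ^ δ) ((1/4:ℝ) ^ δ) * (1/8)) ^ (1/p) := by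
      rw [Real.mul_rpow (Real.rpow_nonneg hh0.le _) (by positivity), ← Real.rpow_mul hh0.le]
    rw [e1, e2] at hre
    calc c * min ((1/8:ℝ) ^ b) ((1/4:ℝ) ^ b)
          * (min ((1/8:ℝ) ^ δ) ((1/4:ℝ) ^ δ) * (1/8)) ^ (1/p) * h ^ (b + (δ+1)*(1/p))
        = c * (h ^ b * min ((1/8:ℝ) ^ b) ((1/4:ℝ) ^ b))
          * (h ^ ((δ+1)*(1/p)) * (min ((1/8:ℝ) ^ δ) ((1/4:ℝ) ^ δ) * (1/8)) ^ (1/p)) := by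
          rw [Real.rpow_add hh0]; ring
      _ ≤ (C:ℝ) * (max ((1:ℝ) ^ δ) ((2:ℝ) ^ δ) * h) ^ (1/p) := hre
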